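/- arXiv:2010.06289 — 4 statements merged into one kernel-verified Lean document; each statement's English description precedes it below -/
import Mathlib

section
/- Let Ω ⊂ ℝⁿ be open and ρ ∈ C²(Ω) a positive function with Δρ ≤ 0 on Ω. Then for every u ∈ C_0^∞(Ω): ∫_Ω u² (|∇ρ|/ρ) dx ≤ 2 (∫_Ω u² dx)^{1/2} (∫_Ω |∇u|² dx)^{1/2}. -/
open MeasureTheory

noncomputable def lap {n : ℕ} (f : EuclideanSpace ℝ (Fin n) → ℝ)
    (x : EuclideanSpace ℝ (Fin n)) : ℝ :=
  ∑ i, fderiv ℝ (fun y => fderiv ℝ f y (EuclideanSpace.single i 1)) x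
      (EuclideanSpace.single i 1)

/-- Partial derivative in the `i`-th coordinate direction. -/
noncomputable def pd {n : ℕ} (f : EuclideanSpace ℝ (Fin n) → ℝ) (i : Fin n)
    (x : EuclideanSpace ℝ (Fin n)) : ℝ :=
  fderiv ℝ f x (EuclideanSpace.single i 1)

lemma lap_eq_sum_pd {n : ℕ} (f : EuclideanSpace ℝ (Fin n) → ℝ)
    (x : EuclideanSpace ℝ (Fin n)) : lap f x = ∑ i, pd (pd f i) i x := rfl

lemma grad_coord {n : ℕ} (f : EuclideanSpace ℝ (Fin n) → ℝ)
    (x : EuclideanSpace ℝ (Fin n)) (i : Fin n) :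
    gradient f x i = pd f i x := by
  have : inner ℝ (gradient f x) (EuclideanSpace.single i (1:ℝ))
      = fderiv ℝ f x (EuclideanSpace.single i 1) :=
    InnerProductSpace.toDual_symm_apply
  rw [EuclideanSpace.inner_single_right] at this
  simpa [pd] using this

lemma norm_grad_sq {n : ℕ} (f : EuclideanSpace ℝ (Fin n) → ℝ)
    (x : EuclideanSpace ℝ (Fin n)) :
    ‖gradient f x‖ ^ 2 = ∑ i, (pd f i x) ^ 2 := by
  rw [EuclideanSpace.norm_eq, Real.sq_sqrt (by positivity)]
  simp [grad_coord, sq_abs]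

lemma norm_grad_eq {n : ℕ} (f : EuclideanSpace ℝ (Fin n) → ℝ)
    (x : EuclideanSpace ℝ (Fin n)) :
    ‖gradient f x‖ = Real.sqrt (∑ i, (pd f i x) ^ 2) := by
  rw [← norm_grad_sq, Real.sqrt_sq (norm_nonneg _)]

theorem gagliardo_nirenberg_superharmonic (n : ℕ)
    (Ω : Set (EuclideanSpace ℝ (Fin n))) (hΩ : IsOpen Ω)
    (ρ : EuclideanSpace ℝ (Fin n) → ℝ)
    (hρC2 : ContDiffOn ℝ 2 ρ Ω) (hρpos : ∀ x ∈ Ω, 0 < ρ x)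
    (hsuper : ∀ x ∈ Ω, lap ρ x ≤ 0)
    (u : EuclideanSpace ℝ (Fin n) → ℝ)
    (hu : ContDiff ℝ (⊤ : ℕ∞) u) (hcs : HasCompactSupport u) (hsupp : tsupport u ⊆ Ω) :
    ∫ x in Ω, (u x) ^ 2 * (‖gradient ρ x‖ / ρ x)
      ≤ 2 * (∫ x in Ω, (u x) ^ 2) ^ (1/2 : ℝ) *
          (∫ x in Ω, ‖gradient u x‖ ^ 2) ^ (1/2 : ℝ) := by
  classical
  set K : Set (EuclideanSpace ℝ (Fin n)) := tsupport u with hKdef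
  have hKc : IsCompact K := hcs
  have huS : ContDiff ℝ (⊤ : ℕ∞) u := hu.of_le (by simp)
  have hud : Differentiable ℝ u := hu.differentiable (by simp)
  -- zero sets
  have hu0 : ∀ x ∉ K, u x = 0 := fun x hx => image_eq_zero_of_notMem_tsupport hx
  have hdu0 : ∀ i, ∀ x ∉ K, pd u i x = 0 := by
    intro i x hx
    have hev : u =ᶠ[nhds x] (fun _ => (0:ℝ)) := by
      filter_upwards [(isClosed_tsupport u).isOpen_compl.mem_nhds hx] with y hy
      exact image_eq_zero_of_notMem_tsupport hy
    have h2 : fderiv ℝ u x = fderiv ℝ (fun _ => (0:ℝ)) x := hev.fderiv_eq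
    simp [pd, h2]
  -- cutoff function
  obtain ⟨L, hLc, hKL, hLΩ⟩ := exists_compact_between hKc hΩ hsupp
  obtain ⟨χ, h1, h0, hχ01⟩ :=
    exists_contMDiffMap_one_nhds_of_subset_interior (I := modelWithCornersSelf ℝ (EuclideanSpace ℝ (Fin n))) (n := (⊤ : ℕ∞))
      hKc.isClosed hKL
  have hχ : ContDiff ℝ (⊤ : ℕ∞) χ := χ.contMDiff.contDiff
  obtain ⟨V₀, hV₀o, hKV₀, hV₀1⟩ := eventually_nhdsSet_iff_exists.mp h1
  set V : Set (EuclideanSpace ℝ (Fin n)) := V₀ ∩ Ω with hVdef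
  have hVo : IsOpen V := hV₀o.inter hΩ
  have hKV : K ⊆ V := fun x hx => ⟨hKV₀ hx, hsupp hx⟩
  have hV1 : ∀ x ∈ V, χ x = 1 := fun x hx => hV₀1 x hx.1
  have hVΩ : V ⊆ Ω := fun x hx => hx.2
  -- the localized functions q i
  set q : Fin n → EuclideanSpace ℝ (Fin n) → ℝ := fun i x => χ x * (pd ρ i x / ρ x) with hqdef
  -- regularity of ρ
  have hρat : ∀ x ∈ Ω, ContDiffAt ℝ 2 ρ x := fun x hx => hρC2.contDiffAt (hΩ.mem_nhds hx)
  have hpdρ : ∀ i, ∀ x ∈ Ω, ContDiffAt ℝ 1 (pd ρ i) x := by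
    intro i x hx
    exact ((hρat x hx).fderiv_right (by norm_num)).clm_apply contDiffAt_const
  -- regularity of q
  have hq_at : ∀ i x, ContDiffAt ℝ 1 (q i) x := by
    intro i x
    by_cases hx : x ∈ Ω
    · exact (hχ.contDiffAt.of_le (by exact_mod_cast le_top)).mul
        ((hpdρ i x hx).div ((hρat x hx).of_le (by norm_num)) (hρpos x hx).ne')
    · have hxL : x ∉ L := fun h => hx (hLΩ h)
      have hev : q i =ᶠ[nhds x] (fun _ => (0:ℝ)) := by
        filter_upwards [hLc.isClosed.isOpen_compl.mem_nhds hxL] with y hy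
        simp [hqdef, h0 y hy]
      exact (contDiffAt_const (c := (0:ℝ))).congr_of_eventuallyEq hev
  have hqd : ∀ i, Differentiable ℝ (q i) :=
    fun i x => (hq_at i x).differentiableAt (by norm_num)
  have hqc : ∀ i, Continuous (q i) := fun i => (hqd i).continuous
  have hqfc : ∀ i, Continuous (fun x => fderiv ℝ (q i) x (EuclideanSpace.single i 1)) := by
    intro i
    rw [continuous_iff_continuousAt]
    intro x
    exact (((hq_at i x).fderiv_right (m := 0) (by norm_num)).clm_apply contDiffAt_const).continuousAt
  -- derivative of q on V
  have hq_on_V : ∀ i, ∀ x ∈ V, q i x = pd ρ i x / ρ x := by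
    intro i x hx; simp [hqdef, hV1 x hx]
  have hkey : ∀ i, ∀ x ∈ V, fderiv ℝ (q i) x (EuclideanSpace.single i 1)
      = pd (pd ρ i) i x / ρ x - (q i x) ^ 2 := by
    intro i x hx
    have hxΩ : x ∈ Ω := hVΩ hx
    have hρx : ρ x ≠ 0 := (hρpos x hxΩ).ne'
    have hev : q i =ᶠ[nhds x] (fun y => pd ρ i y * (ρ y)⁻¹) := by
      filter_upwards [hVo.mem_nhds hx] with y hy
      rw [hq_on_V i y hy, div_eq_mul_inv]
    have hp : HasFDerivAt (pd ρ i) (fderiv ℝ (pd ρ i) x) x :=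
      (((hpdρ i x hxΩ)).differentiableAt one_ne_zero).hasFDerivAt
    have hρ' : HasFDerivAt ρ (fderiv ℝ ρ x) x :=
      (((hρat x hxΩ).of_le (by norm_num)).differentiableAt one_ne_zero).hasFDerivAt
    have hinv : HasFDerivAt (fun y => (ρ y)⁻¹) ((-(ρ x ^ 2)⁻¹) • fderiv ℝ ρ x) x :=
      (hasDerivAt_inv hρx).comp_hasFDerivAt x hρ'
    have hmul : HasFDerivAt (fun y => pd ρ i y * (ρ y)⁻¹)
        (pd ρ i x • ((-(ρ x ^ 2)⁻¹) • fderiv ℝ ρ x) + (ρ x)⁻¹ • fderiv ℝ (pd ρ i) x) x :=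
      hp.mul hinv
    have hfd : fderiv ℝ (q i) x
        = pd ρ i x • ((-(ρ x ^ 2)⁻¹) • fderiv ℝ ρ x) + (ρ x)⁻¹ • fderiv ℝ (pd ρ i) x := by
      rw [hev.fderiv_eq, hmul.fderiv]
    rw [hfd, hq_on_V i x hx]
    simp only [ContinuousLinearMap.add_apply, ContinuousLinearMap.smul_apply, smul_eq_mul]
    have e1 : fderiv ℝ ρ x (EuclideanSpace.single i 1) = pd ρ i x := rfl
    have e2 : fderiv ℝ (pd ρ i) x (EuclideanSpace.single i 1) = pd (pd ρ i) i x := rfl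
    rw [e1, e2]
    field_simp
    ring
  -- the function w = u^2 and its derivative
  set w : EuclideanSpace ℝ (Fin n) → ℝ := fun x => u x ^ 2 with hwdef
  have hwmul : w = fun y => u y * u y := by funext y; rw [hwdef]; ring
  have hwd : Differentiable ℝ w := by rw [hwmul]; exact hud.mul hud
  -- derivative of w
  have hfw : ∀ i x, fderiv ℝ w x (EuclideanSpace.single i 1) = 2 * u x * pd u i x := by
    intro i x
    have h : HasFDerivAt w (u x • fderiv ℝ u x + u x • fderiv ℝ u x) x := by
      rw [hwmul]
      exact ((hud x).hasFDerivAt).mul ((hud x).hasFDerivAt)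
    rw [h.fderiv]
    simp only [ContinuousLinearMap.add_apply, ContinuousLinearMap.smul_apply, smul_eq_mul, pd]
    ring
  -- integrability helper
  have hint : ∀ f : EuclideanSpace ℝ (Fin n) → ℝ, Continuous f → (∀ x ∉ K, f x = 0) →
      Integrable f volume := fun f hc h0' =>
    hc.integrable_of_hasCompactSupport (HasCompactSupport.intro hKc h0')
  have hwc : Continuous w := hwd.continuous
  have hduc : ∀ i, Continuous (pd u i) := by
    intro i
    rw [continuous_iff_continuousAt]; intro x
    exact ((hu.contDiffAt.fderiv_right (m := (0:ℕ∞)) (by simp)).clm_apply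
      contDiffAt_const).continuousAt
  have hw0 : ∀ x ∉ K, w x = 0 := fun x hx => by simp [hwdef, hu0 x hx]
  -- the three families of integrable functions
  have hqint : ∀ i, Integrable (fun x => 2 * u x * pd u i x * q i x) volume := fun i =>
    hint _ (((continuous_const.mul hu.continuous).mul (hduc i)).mul (hqc i))
      (fun x hx => by simp [hu0 x hx])
  have hwqint : ∀ i, Integrable
      (fun x => w x * fderiv ℝ (q i) x (EuclideanSpace.single i 1)) volume := fun i =>
    hint _ (hwc.mul (hqfc i)) (fun x hx => by simp [hw0 x hx])
  -- integration by parts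
  have hIBP : ∀ i, ∫ x, w x * fderiv ℝ (q i) x (EuclideanSpace.single i 1)
      = - ∫ x, 2 * u x * pd u i x * q i x := by
    intro i
    have h1 : Integrable (fun x => fderiv ℝ w x (EuclideanSpace.single i 1) * q i x) volume := by
      have he : (fun x => fderiv ℝ w x (EuclideanSpace.single i 1) * q i x)
          = fun x => 2 * u x * pd u i x * q i x := by funext x; rw [hfw]
      rw [he]; exact hqint i
    have h3 : Integrable (fun x => w x * q i x) volume :=
      hint _ (hwc.mul (hqc i)) (fun x hx => by simp [hw0 x hx])
    have := integral_mul_fderiv_eq_neg_fderiv_mul_of_integrable h1 (hwqint i) h3 (fun x _ => hwd x) (fun x _ => hqd i x)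
    rw [this]
    congr 1
    apply integral_congr_ae
    filter_upwards with x
    rw [hfw]
  -- the sums
  set S : EuclideanSpace ℝ (Fin n) → ℝ := fun x => ∑ i, (q i x) ^ 2 with hSdef
  set T : EuclideanSpace ℝ (Fin n) → ℝ := fun x => ∑ i, (pd u i x) ^ 2 with hTdef
  have hS0 : ∀ x, 0 ≤ S x := fun x => Finset.sum_nonneg fun i _ => sq_nonneg _
  have hT0 : ∀ x, 0 ≤ T x := fun x => Finset.sum_nonneg fun i _ => sq_nonneg _
  have hSc : Continuous S := continuous_finset_sum _ fun i _ => (hqc i).pow 2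
  have hTc : Continuous T := continuous_finset_sum _ fun i _ => (hduc i).pow 2
  have hT0K : ∀ x ∉ K, T x = 0 := fun x hx => by
    simp [hTdef, fun i => hdu0 i x hx]
  have hwSint : Integrable (fun x => w x * S x) volume :=
    hint _ (hwc.mul hSc) (fun x hx => by simp [hw0 x hx])
  have hTint : Integrable T volume := hint _ hTc hT0K
  -- key pointwise identity
  have hFsum : ∀ x, ∑ i, w x * fderiv ℝ (q i) x (EuclideanSpace.single i 1)
      = w x * (lap ρ x / ρ x) - w x * S x := by
    intro x
    by_cases hx : x ∈ V
    · have h1 : ∀ i ∈ Finset.univ, w x * fderiv ℝ (q i) x (EuclideanSpace.single i 1)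
          = w x * (pd (pd ρ i) i x / ρ x) - w x * (q i x) ^ 2 := by
        intro i _
        rw [hkey i x hx]; ring
      rw [Finset.sum_congr rfl h1, Finset.sum_sub_distrib, ← Finset.mul_sum, ← Finset.mul_sum,
        ← Finset.sum_div, lap_eq_sum_pd]
    · have hxK : x ∉ K := fun h => hx (hKV h)
      simp [hw0 x hxK]
  -- the integral identity
  have hFint : Integrable
      (fun x => ∑ i, w x * fderiv ℝ (q i) x (EuclideanSpace.single i 1)) volume :=
    integrable_finset_sum _ fun i _ => hwqint i
  have hGint : Integrable (fun x => w x * (lap ρ x / ρ x)) volume := by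
    have he : (fun x => w x * (lap ρ x / ρ x))
        = fun x => (∑ i, w x * fderiv ℝ (q i) x (EuclideanSpace.single i 1)) + w x * S x := by
      funext x; rw [hFsum x]; ring
    rw [he]; exact hFint.add hwSint
  have hPint : Integrable (fun x => ∑ i, 2 * u x * pd u i x * q i x) volume :=
    integrable_finset_sum _ fun i _ => hqint i
  have hmain : ∫ x, w x * S x = (∫ x, w x * (lap ρ x / ρ x))
      + ∫ x, ∑ i, 2 * u x * pd u i x * q i x := by
    have e1 : ∫ x, (w x * (lap ρ x / ρ x) - w x * S x)
        = (∫ x, w x * (lap ρ x / ρ x)) - ∫ x, w x * S x := integral_sub hGint hwSint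
    have e2 : ∫ x, (w x * (lap ρ x / ρ x) - w x * S x)
        = - ∫ x, ∑ i, 2 * u x * pd u i x * q i x := by
      have e3 : (fun x => w x * (lap ρ x / ρ x) - w x * S x)
          = fun x => ∑ i, w x * fderiv ℝ (q i) x (EuclideanSpace.single i 1) := by
        funext x; rw [hFsum x]
      rw [e3, integral_finset_sum _ fun i _ => hwqint i,
        integral_finset_sum _ fun i _ => hqint i]
      rw [Finset.sum_congr rfl fun i _ => hIBP i, ← Finset.sum_neg_distrib]
    rw [e2] at e1
    linarith
  -- sign of the Laplacian term
  have hGle : ∫ x, w x * (lap ρ x / ρ x) ≤ 0 := by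
    apply integral_nonpos
    intro x
    show w x * (lap ρ x / ρ x) ≤ 0
    by_cases hx : x ∈ K
    · have hxΩ : x ∈ Ω := hsupp hx
      have h1 : lap ρ x / ρ x ≤ 0 :=
        div_nonpos_of_nonpos_of_nonneg (hsuper x hxΩ) (hρpos x hxΩ).le
      have h2 : 0 ≤ w x := sq_nonneg _
      nlinarith [mul_nonneg h2 (neg_nonneg.2 h1)]
    · simp [hw0 x hx]
  -- pointwise AM-GM bound
  have hPle : ∫ x, ∑ i, 2 * u x * pd u i x * q i x
      ≤ (1/2) * (∫ x, w x * S x) + 2 * ∫ x, T x := by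
    rw [← integral_const_mul, ← integral_const_mul, ← integral_add (hwSint.const_mul _)
      (hTint.const_mul _)]
    apply integral_mono hPint ((hwSint.const_mul _).add (hTint.const_mul _))
    intro x
    have h1 : ∀ i ∈ Finset.univ, 2 * u x * pd u i x * q i x
        ≤ (1/2) * (u x * q i x) ^ 2 + 2 * (pd u i x) ^ 2 := by
      intro i _
      nlinarith [sq_nonneg (u x * q i x - 2 * pd u i x)]
    have h2 : w x * S x = ∑ i, (u x * q i x) ^ 2 := by
      rw [hSdef, hwdef, Finset.mul_sum]
      exact Finset.sum_congr rfl fun i _ => by ring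
    calc ∑ i, 2 * u x * pd u i x * q i x
        ≤ ∑ i, ((1/2) * (u x * q i x) ^ 2 + 2 * (pd u i x) ^ 2) := Finset.sum_le_sum h1
      _ = (1/2) * (w x * S x) + 2 * T x := by
          rw [Finset.sum_add_distrib, ← Finset.mul_sum, ← Finset.mul_sum, h2, hTdef]
  -- Hardy inequality
  have hA4B : ∫ x, w x * S x ≤ 4 * ∫ x, T x := by
    have := hmain
    linarith
  -- nonnegativity
  have hA0 : 0 ≤ ∫ x, w x * S x :=
    integral_nonneg fun x => mul_nonneg (sq_nonneg _) (hS0 x)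
  have hB0 : 0 ≤ ∫ x, T x := integral_nonneg fun x => hT0 x
  have hu20 : 0 ≤ ∫ x, u x ^ 2 := integral_nonneg fun x => sq_nonneg _
  -- Cauchy-Schwarz (Hölder with p = q = 2)
  have hconj : (2:ℝ).HolderConjugate 2 := by constructor <;> norm_num
  have habs_mem : MemLp (fun x => |u x|) (ENNReal.ofReal 2) volume :=
    (hu.continuous.abs).memLp_of_hasCompactSupport
      (HasCompactSupport.intro hKc fun x hx => by simp [hu0 x hx])
  have hg_mem : MemLp (fun x => |u x| * Real.sqrt (S x)) (ENNReal.ofReal 2) volume :=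
    ((hu.continuous.abs).mul (Real.continuous_sqrt.comp hSc)).memLp_of_hasCompactSupport
      (HasCompactSupport.intro hKc fun x hx => by simp [hu0 x hx])
  have hCS := integral_mul_le_Lp_mul_Lq_of_nonneg (μ := volume) hconj
    (Filter.Eventually.of_forall fun x => abs_nonneg (u x))
    (Filter.Eventually.of_forall fun x =>
      mul_nonneg (abs_nonneg _) (Real.sqrt_nonneg _)) habs_mem hg_mem
  have hrpow2 : ∀ a : ℝ, a ^ (2:ℝ) = a ^ (2:ℕ) := fun a => by
    rw [show ((2:ℝ)) = ((2:ℕ):ℝ) by norm_num, Real.rpow_natCast]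
  have eq1 : (fun x => |u x| ^ (2:ℝ)) = fun x => u x ^ 2 := by
    funext x; rw [hrpow2, sq_abs]
  have eq2 : (fun x => (|u x| * Real.sqrt (S x)) ^ (2:ℝ)) = fun x => w x * S x := by
    funext x
    rw [hrpow2, mul_pow, sq_abs, Real.sq_sqrt (hS0 x), hwdef]
  rw [eq1, eq2] at hCS
  -- identify the left-hand side
  have hLHS : ∫ x in Ω, u x ^ 2 * (‖gradient ρ x‖ / ρ x)
      = ∫ x, |u x| * (|u x| * Real.sqrt (S x)) := by
    rw [setIntegral_eq_integral_of_forall_compl_eq_zero (fun x hx => by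
      have hxK : x ∉ K := fun h => hx (hsupp h)
      simp [hu0 x hxK])]
    congr 1
    funext x
    by_cases hx : x ∈ K
    · have hxV : x ∈ V := hKV hx
      have hxΩ : x ∈ Ω := hVΩ hxV
      have hρx : 0 < ρ x := hρpos x hxΩ
      have hSx : S x = (∑ i, (pd ρ i x) ^ 2) / ρ x ^ 2 := by
        have e : ∀ i ∈ Finset.univ, (q i x) ^ 2 = (pd ρ i x) ^ 2 / ρ x ^ 2 := fun i _ => by
          rw [hq_on_V i x hxV, div_pow]
        simp only [hSdef]
        rw [Finset.sum_congr rfl e, ← Finset.sum_div]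
      have hsq : Real.sqrt (S x) = ‖gradient ρ x‖ / ρ x := by
        rw [hSx, Real.sqrt_div (Finset.sum_nonneg fun i _ => sq_nonneg _),
          Real.sqrt_sq hρx.le, norm_grad_eq]
      rw [hsq, ← sq_abs (u x)]
      ring
    · simp [hu0 x hx]
  -- identify the right-hand side integrals
  have hR1 : ∫ x in Ω, u x ^ 2 = ∫ x, u x ^ 2 :=
    setIntegral_eq_integral_of_forall_compl_eq_zero fun x hx => by
      have hxK : x ∉ K := fun h => hx (hsupp h)
      simp [hu0 x hxK]
  have hR2 : ∫ x in Ω, ‖gradient u x‖ ^ 2 = ∫ x, T x := by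
    have he : (fun x => ‖gradient u x‖ ^ 2) = T := by
      funext x; rw [norm_grad_sq, hTdef]
    calc ∫ x in Ω, ‖gradient u x‖ ^ 2 = ∫ x in Ω, T x := by rw [← he]
      _ = ∫ x, T x := setIntegral_eq_integral_of_forall_compl_eq_zero fun x hx =>
          hT0K x (fun h => hx (hsupp h))
  -- rpow arithmetic
  have h4half : ((4:ℝ) * ∫ x, T x) ^ (1/2:ℝ) = 2 * (∫ x, T x) ^ (1/2:ℝ) := by
    rw [Real.mul_rpow (by norm_num) hB0]
    congr 1
    rw [show (4:ℝ) = 2 ^ (2:ℕ) by norm_num, ← Real.rpow_natCast 2 2,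
      ← Real.rpow_mul (by norm_num : (0:ℝ) ≤ 2)]
    norm_num
  have hmono : (∫ x, w x * S x) ^ (1/2:ℝ) ≤ ((4:ℝ) * ∫ x, T x) ^ (1/2:ℝ) :=
    Real.rpow_le_rpow hA0 hA4B (by norm_num)
  have hW : ∫ x, u x ^ 2 * S x = ∫ x, w x * S x := by
    congr 1
  calc ∫ x in Ω, u x ^ 2 * (‖gradient ρ x‖ / ρ x)
      = ∫ x, |u x| * (|u x| * Real.sqrt (S x)) := hLHS
    _ ≤ (∫ x, u x ^ 2) ^ (1/(2:ℝ)) * (∫ x, w x * S x) ^ (1/(2:ℝ)) := hCS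
    _ ≤ (∫ x, u x ^ 2) ^ (1/(2:ℝ)) * ((4:ℝ) * ∫ x, T x) ^ (1/2:ℝ) := by
        apply mul_le_mul_of_nonneg_left hmono (Real.rpow_nonneg hu20 _)
    _ = 2 * (∫ x in Ω, u x ^ 2) ^ (1/2:ℝ) * (∫ x in Ω, ‖gradient u x‖ ^ 2) ^ (1/2:ℝ) := by
        rw [h4half, hR1, hR2]
        ring
end

section
/- Let Ω ⊂ ℝⁿ be open and ρ ∈ C²(Ω) a positive function with Δρ ≤ 0 and ∇ρ ≠ 0 on Ω. Then for every u ∈ C_0^∞(Ω): ∫_Ω u² dx ≤ 2 (∫_Ω |∇u|² dx)^{1/2} (∫_Ω u² ρ²/|∇ρ|² dx)^{1/2}. -/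
open MeasureTheory Filter Topology

section Aux

variable {n : ℕ}
local notation "E" => EuclideanSpace ℝ (Fin n)

lemma hpw_grad_apply (f : E → ℝ) (x w : E) : fderiv ℝ f x w = (inner ℝ (gradient f x) w : ℝ) :=
  (InnerProductSpace.toDual_symm_apply).symm

lemma hpw_grad_coord (f : E → ℝ) (x : E) (i : Fin n) :
    fderiv ℝ f x (EuclideanSpace.single i 1) = gradient f x i := by
  rw [hpw_grad_apply, EuclideanSpace.inner_single_right]
  simp

lemma hpw_norm_sq_sum (g : E) : ‖g‖^2 = ∑ i, g i ^ 2 := by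
  rw [EuclideanSpace.norm_eq, Real.sq_sqrt (by positivity)]
  simp [sq_abs]

lemma hpw_inner_sum (a b : E) : (inner ℝ a b : ℝ) = ∑ i, a i * b i := by
  simp [PiLp.inner_apply, RCLike.inner_apply, conj_trivial]
  exact Finset.sum_congr rfl (fun i _ => mul_comm _ _)

lemma hpw_integral_fd_zero (f : E → ℝ) (v : E)
    (hd : Differentiable ℝ f) (hf : Integrable f) (hf' : Integrable (fun x => fderiv ℝ f x v)) :
    ∫ x, fderiv ℝ f x v = 0 := by
  have h := integral_mul_fderiv_eq_neg_fderiv_mul_of_integrable (μ := volume)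
      (f := fun _ : E => (1:ℝ)) (g := f) (v := v)
      (by simpa using (integrable_zero _ _ _)) (by simpa using hf') (by simpa using hf)
      (fun x _ => differentiableAt_const 1) (fun x _ => hd x)
  simpa using h

lemma hpw_glue_cont {Ω K : Set E} (hΩ : IsOpen Ω) (hK : IsClosed K)
    (hKΩ : K ⊆ Ω) {f : E → ℝ} (h1 : ContinuousOn f Ω) (h0 : ∀ x ∉ K, f x = 0) :
    Continuous f := by
  rw [continuous_iff_continuousAt]
  intro x
  by_cases hx : x ∈ Ω
  · exact h1.continuousAt (hΩ.mem_nhds hx)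
  · have hxK : x ∉ K := fun h => hx (hKΩ h)
    have hev : (fun _ => (0:ℝ)) =ᶠ[𝓝 x] f := by
      filter_upwards [hK.isOpen_compl.mem_nhds hxK] with y hy
      exact (h0 y hy).symm
    exact continuousAt_const.congr hev

lemma hpw_div_formula_at {Ω : Set E} (hΩ : IsOpen Ω)
    {ρ u : E → ℝ} (hρC2 : ContDiffOn ℝ 2 ρ Ω) (hρpos : ∀ x ∈ Ω, 0 < ρ x)
    (hu : ContDiff ℝ (⊤ : ℕ∞) u) {x : E} (hx : x ∈ Ω) :
    ∑ i, fderiv ℝ (fun y => (u y ^ 2 * (ρ y)⁻¹) * fderiv ℝ ρ y (EuclideanSpace.single i 1)) x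
        (EuclideanSpace.single i 1)
      = 2 * (u x * (inner ℝ (gradient u x) (gradient ρ x) : ℝ) * (ρ x)⁻¹)
        + (u x ^ 2 * (ρ x)⁻¹) * lap ρ x
        - u x ^ 2 * ‖gradient ρ x‖ ^ 2 * ((ρ x) ^ 2)⁻¹ := by
  have hρx : 0 < ρ x := hρpos x hx
  have hud : HasFDerivAt u (fderiv ℝ u x) x := (hu.differentiable (by simp) x).hasFDerivAt
  have hρd : HasFDerivAt ρ (fderiv ℝ ρ x) x :=
    (((hρC2.differentiableOn (by norm_num)).differentiableAt (hΩ.mem_nhds hx))).hasFDerivAt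
  have hinv : HasFDerivAt (fun y => (ρ y)⁻¹) (-((ρ x ^ 2)⁻¹) • fderiv ℝ ρ x) x := by
    have h1 : HasDerivAt (fun t : ℝ => t⁻¹) (-((ρ x ^ 2)⁻¹)) (ρ x) := by
      simpa using hasDerivAt_inv hρx.ne'
    exact h1.comp_hasFDerivAt x hρd
  have hsq : HasFDerivAt (fun y => u y ^ 2) ((2 * u x) • fderiv ℝ u x) x := by
    have h2 : HasFDerivAt (fun y => u y * u y)
        (u x • fderiv ℝ u x + u x • fderiv ℝ u x) x := hud.mul hud
    have : (fun y => u y * u y) = fun y => u y ^ 2 := by ext y; ring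
    rw [this] at h2
    convert h2 using 1
    rw [two_mul, add_smul]
  have hP : HasFDerivAt (fun y => u y ^ 2 * (ρ y)⁻¹)
      ((u x ^ 2) • (-((ρ x ^ 2)⁻¹) • fderiv ℝ ρ x) + (ρ x)⁻¹ • ((2 * u x) • fderiv ℝ u x)) x :=
    hsq.mul hinv
  have hρC1 : ContDiffOn ℝ 1 (fderiv ℝ ρ) Ω := hρC2.fderiv_of_isOpen hΩ (by norm_num)
  have hDρdiff : ∀ i : Fin n, DifferentiableAt ℝ
      (fun y => fderiv ℝ ρ y (EuclideanSpace.single i 1)) x := fun i =>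
    (((hρC1.differentiableOn one_ne_zero).differentiableAt (hΩ.mem_nhds hx))).clm_apply
      (differentiableAt_const _)
  have hFi : ∀ i : Fin n,
      fderiv ℝ (fun y => (u y ^ 2 * (ρ y)⁻¹) * fderiv ℝ ρ y (EuclideanSpace.single i 1)) x
        (EuclideanSpace.single i 1)
      = (u x ^ 2 * (ρ x)⁻¹) *
          fderiv ℝ (fun y => fderiv ℝ ρ y (EuclideanSpace.single i 1)) x
            (EuclideanSpace.single i 1)
        + fderiv ℝ ρ x (EuclideanSpace.single i 1) *
          (u x ^ 2 * (-((ρ x ^ 2)⁻¹) * fderiv ℝ ρ x (EuclideanSpace.single i 1))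
            + (ρ x)⁻¹ * (2 * u x * fderiv ℝ u x (EuclideanSpace.single i 1))) := by
    intro i
    have hD : HasFDerivAt (fun y => fderiv ℝ ρ y (EuclideanSpace.single i 1))
        (fderiv ℝ (fun y => fderiv ℝ ρ y (EuclideanSpace.single i 1)) x) x :=
      (hDρdiff i).hasFDerivAt
    have hmul : HasFDerivAt
        (fun y => (u y ^ 2 * (ρ y)⁻¹) * fderiv ℝ ρ y (EuclideanSpace.single i 1)) _ x :=
      hP.mul hD
    rw [hmul.fderiv]
    simp [ContinuousLinearMap.add_apply, ContinuousLinearMap.smul_apply]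
    ring
  rw [Finset.sum_congr rfl (fun i _ => hFi i)]
  rw [Finset.sum_add_distrib, ← Finset.mul_sum]
  have hlap : (∑ i, fderiv ℝ (fun y => fderiv ℝ ρ y (EuclideanSpace.single i 1)) x
      (EuclideanSpace.single i 1)) = lap ρ x := rfl
  rw [hlap]
  simp only [hpw_grad_coord ρ x, hpw_grad_coord u x]
  rw [hpw_inner_sum, hpw_norm_sq_sum]
  have key : ∀ i : Fin n, gradient ρ x i *
      (u x ^ 2 * (-(ρ x ^ 2)⁻¹ * gradient ρ x i) + (ρ x)⁻¹ * (2 * u x * gradient u x i))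
      = (2 * u x * (ρ x)⁻¹) * (gradient u x i * gradient ρ x i)
        - (u x ^ 2 * (ρ x ^ 2)⁻¹) * gradient ρ x i ^ 2 := fun i => by ring
  rw [Finset.sum_congr rfl (fun i _ => key i), Finset.sum_sub_distrib,
    ← Finset.mul_sum, ← Finset.mul_sum]
  ring

lemma hpw_holder (f g : E → ℝ) (hf : Continuous f) (hg : Continuous g)
    (hcf : HasCompactSupport f) (hcg : HasCompactSupport g)
    (hf0 : ∀ x, 0 ≤ f x) (hg0 : ∀ x, 0 ≤ g x) :
    ∫ x, f x * g x ≤ (∫ x, f x ^ 2) ^ (1/2:ℝ) * (∫ x, g x ^ 2) ^ (1/2:ℝ) := by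
  have h22 : (2:ℝ).HolderConjugate 2 := Real.HolderConjugate.two_two
  have h := integral_mul_le_Lp_mul_Lq_of_nonneg (μ := volume) h22
    (Eventually.of_forall hf0) (Eventually.of_forall hg0)
    (hf.memLp_of_hasCompactSupport hcf) (hg.memLp_of_hasCompactSupport hcg)
  have h2 : ∀ y : ℝ, y ^ (2:ℝ) = y ^ (2:ℕ) := fun y => by
    rw [show (2:ℝ) = ((2:ℕ):ℝ) by norm_num, Real.rpow_natCast]
  simp_rw [h2] at h
  exact h

end Aux


theorem heisenberg_pauli_weyl_superharmonic (n : ℕ)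
    (Ω : Set (EuclideanSpace ℝ (Fin n))) (hΩ : IsOpen Ω)
    (ρ : EuclideanSpace ℝ (Fin n) → ℝ)
    (hρC2 : ContDiffOn ℝ 2 ρ Ω) (hρpos : ∀ x ∈ Ω, 0 < ρ x)
    (hsuper : ∀ x ∈ Ω, lap ρ x ≤ 0)
    (hgradne : ∀ x ∈ Ω, gradient ρ x ≠ 0)
    (u : EuclideanSpace ℝ (Fin n) → ℝ)
    (hu : ContDiff ℝ (⊤ : ℕ∞) u) (hcs : HasCompactSupport u) (hsupp : tsupport u ⊆ Ω) :
    ∫ x in Ω, (u x) ^ 2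
      ≤ 2 * (∫ x in Ω, ‖gradient u x‖ ^ 2) ^ (1/2 : ℝ) *
          (∫ x in Ω, (u x) ^ 2 * (ρ x) ^ 2 / ‖gradient ρ x‖ ^ 2) ^ (1/2 : ℝ) := by
  classical
  have hKc : IsCompact (tsupport u) := hcs
  have hKcl : IsClosed (tsupport u) := isClosed_tsupport u
  have hKΩ : tsupport u ⊆ Ω := hsupp
  have huz : ∀ x, x ∉ tsupport u → u x = 0 := fun x hx => image_eq_zero_of_notMem_tsupport hx
  have hmem : ∀ x, u x ≠ 0 → x ∈ Ω := fun x hx => hKΩ (subset_tsupport u hx)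
  set F : Fin n → EuclideanSpace ℝ (Fin n) → ℝ :=
    fun i y => (u y ^ 2 * (ρ y)⁻¹) * fderiv ℝ ρ y (EuclideanSpace.single i 1) with hFdef
  have hρC1 : ContDiffOn ℝ 1 (fderiv ℝ ρ) Ω := hρC2.fderiv_of_isOpen hΩ (by norm_num)
  have hucont : Continuous u := hu.continuous
  -- regularity of F i on Ω
  have hFC1 : ∀ i, ContDiffOn ℝ 1 (F i) Ω := by
    intro i
    apply ContDiffOn.mul
    · exact (((hu.of_le (by simp)).pow 2).contDiffOn).mul
        ((hρC2.of_le (by norm_num)).inv (fun x hx => (hρpos x hx).ne'))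
    · exact hρC1.clm_apply contDiffOn_const
  have hFeq0 : ∀ i x, x ∉ tsupport u → F i =ᶠ[𝓝 x] (fun _ => 0) := by
    intro i x hx
    filter_upwards [hKcl.isOpen_compl.mem_nhds hx] with y hy
    simp [hFdef, huz y hy]
  have hFdiff : ∀ i, Differentiable ℝ (F i) := by
    intro i x
    by_cases hx : x ∈ Ω
    · exact (((hFC1 i).differentiableOn one_ne_zero).differentiableAt (hΩ.mem_nhds hx))
    · exact (differentiableAt_const (0:ℝ)).congr_of_eventuallyEq
        (hFeq0 i x (fun h => hx (hKΩ h)))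
  have hF'eq : ∀ i x, x ∉ tsupport u → fderiv ℝ (F i) x = 0 := by
    intro i x hx
    rw [(hFeq0 i x hx).fderiv_eq]
    exact fderiv_const_apply 0
  have hφcont : ∀ i, Continuous (fun x => fderiv ℝ (F i) x (EuclideanSpace.single i 1)) := by
    intro i
    apply hpw_glue_cont hΩ hKcl hKΩ
    · exact ((hFC1 i).continuousOn_fderiv_of_isOpen hΩ le_rfl).clm_apply continuousOn_const
    · intro x hx; rw [hF'eq i x hx]; simp
  have hFcont : ∀ i, Continuous (F i) := fun i =>
    hpw_glue_cont hΩ hKcl hKΩ (hFC1 i).continuousOn (fun x hx => by simp [hFdef, huz x hx])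
  have hφsupp : ∀ i, HasCompactSupport
      (fun x => fderiv ℝ (F i) x (EuclideanSpace.single i 1)) := fun i =>
    HasCompactSupport.intro hKc (fun x hx => by rw [hF'eq i x hx]; simp)
  have hFsupp : ∀ i, HasCompactSupport (F i) := fun i =>
    HasCompactSupport.intro hKc (fun x hx => by simp [hFdef, huz x hx])
  have hφint : ∀ i, Integrable (fun x => fderiv ℝ (F i) x (EuclideanSpace.single i 1)) :=
    fun i => (hφcont i).integrable_of_hasCompactSupport (hφsupp i)
  have hIBP : ∀ i, ∫ x, fderiv ℝ (F i) x (EuclideanSpace.single i 1) = 0 := fun i =>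
    hpw_integral_fd_zero _ _ (hFdiff i)
      ((hFcont i).integrable_of_hasCompactSupport (hFsupp i)) (hφint i)
  -- the three components of the divergence
  set g1 : EuclideanSpace ℝ (Fin n) → ℝ :=
    fun x => u x * (inner ℝ (gradient u x) (gradient ρ x) : ℝ) * (ρ x)⁻¹ with hg1
  set g2 : EuclideanSpace ℝ (Fin n) → ℝ :=
    fun x => (u x ^ 2 * (ρ x)⁻¹) * lap ρ x with hg2
  set g3 : EuclideanSpace ℝ (Fin n) → ℝ :=
    fun x => u x ^ 2 * ‖gradient ρ x‖ ^ 2 * ((ρ x) ^ 2)⁻¹ with hg3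
  have hdivglobal : ∀ x, (∑ i, fderiv ℝ (F i) x (EuclideanSpace.single i 1))
      = 2 * g1 x + g2 x - g3 x := by
    intro x
    by_cases hx : x ∈ Ω
    · simp only [hg1, hg2, hg3, hFdef]
      exact hpw_div_formula_at hΩ hρC2 hρpos hu hx
    · have hxK : x ∉ tsupport u := fun h => hx (hKΩ h)
      have h0 : u x = 0 := huz x hxK
      have hterm : ∀ i : Fin n, fderiv ℝ (F i) x (EuclideanSpace.single i 1) = 0 := by
        intro i; rw [hF'eq i x hxK]; simp
      rw [Finset.sum_congr rfl (fun i _ => hterm i)]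
      simp [hg1, hg2, hg3, h0]
  -- continuity of the components
  have hgradu_cont : Continuous (gradient u) := by
    show Continuous fun x => (InnerProductSpace.toDual ℝ _).symm (fderiv ℝ u x)
    exact (InnerProductSpace.toDual ℝ _).symm.continuous.comp (hu.continuous_fderiv (by simp))
  have hgradρ_contOn : ContinuousOn (gradient ρ) Ω := by
    show ContinuousOn (fun x => (InnerProductSpace.toDual ℝ _).symm (fderiv ℝ ρ x)) Ω
    exact (InnerProductSpace.toDual ℝ _).symm.continuous.comp_continuousOn hρC1.continuousOn
  have hlap_contOn : ContinuousOn (lap ρ) Ω := by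
    apply continuousOn_finset_sum
    intro i _
    exact (((hρC1.clm_apply contDiffOn_const).continuousOn_fderiv_of_isOpen hΩ
      le_rfl).clm_apply continuousOn_const)
  have hρinv_contOn : ContinuousOn (fun x => (ρ x)⁻¹) Ω :=
    hρC2.continuousOn.inv₀ (fun x hx => (hρpos x hx).ne')
  have hgradu0 : ∀ x, x ∉ tsupport u → gradient u x = 0 := by
    intro x hx
    have hev : u =ᶠ[𝓝 x] (fun _ => 0) := by
      filter_upwards [hKcl.isOpen_compl.mem_nhds hx] with y hy
      exact huz y hy
    rw [hev.gradient_eq]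
    exact gradient_const _ _
  have hg1cont : Continuous g1 := by
    apply hpw_glue_cont hΩ hKcl hKΩ
    · exact ((hucont.continuousOn.mul
        (hgradu_cont.continuousOn.inner hgradρ_contOn)).mul hρinv_contOn)
    · intro x hx; simp [hg1, huz x hx]
  have hg2cont : Continuous g2 := by
    apply hpw_glue_cont hΩ hKcl hKΩ
    · exact (((hucont.pow 2).continuousOn.mul hρinv_contOn).mul hlap_contOn)
    · intro x hx; simp [hg2, huz x hx]
  have hg3cont : Continuous g3 := by
    apply hpw_glue_cont hΩ hKcl hKΩ
    · exact ((hucont.pow 2).continuousOn.mul (hgradρ_contOn.norm.pow 2)).mul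
        ((hρC2.continuousOn.pow 2).inv₀ (fun x hx => pow_ne_zero 2 (hρpos x hx).ne'))
    · intro x hx; simp [hg3, huz x hx]
  have hg1supp : HasCompactSupport g1 :=
    HasCompactSupport.intro hKc (fun x hx => by simp [hg1, huz x hx])
  have hg2supp : HasCompactSupport g2 :=
    HasCompactSupport.intro hKc (fun x hx => by simp [hg2, huz x hx])
  have hg3supp : HasCompactSupport g3 :=
    HasCompactSupport.intro hKc (fun x hx => by simp [hg3, huz x hx])
  have hg1int : Integrable g1 := hg1cont.integrable_of_hasCompactSupport hg1supp
  have hg2int : Integrable g2 := hg2cont.integrable_of_hasCompactSupport hg2supp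
  have hg3int : Integrable g3 := hg3cont.integrable_of_hasCompactSupport hg3supp
  -- the divergence identity integrated
  have hsum0 : (2 * ∫ x, g1 x) + (∫ x, g2 x) - (∫ x, g3 x) = 0 := by
    have h1 : ∫ x, (2 * g1 x + g2 x - g3 x) = 0 := by
      rw [integral_congr_ae (Eventually.of_forall (fun x => (hdivglobal x).symm))]
      rw [integral_finset_sum _ (fun i _ => hφint i)]
      simp [hIBP]
    have ha : Integrable (fun x => 2 * g1 x + g2 x) := (hg1int.const_mul 2).add hg2int
    have e1 : ∫ x, (2 * g1 x + g2 x - g3 x)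
        = (∫ x, (2 * g1 x + g2 x)) - ∫ x, g3 x := integral_sub ha hg3int
    have e2 : ∫ x, (2 * g1 x + g2 x) = (∫ x, 2 * g1 x) + ∫ x, g2 x :=
      integral_add (hg1int.const_mul 2) hg2int
    have e3 : ∫ x, 2 * g1 x = 2 * ∫ x, g1 x := integral_const_mul 2 _
    rw [e1, e2, e3] at h1
    linarith
  -- auxiliary nonnegative functions
  set b : EuclideanSpace ℝ (Fin n) → ℝ :=
    fun x => |u x| * ‖gradient ρ x‖ * (ρ x)⁻¹ with hbdef
  set c : EuclideanSpace ℝ (Fin n) → ℝ :=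
    fun x => |u x| * ρ x * ‖gradient ρ x‖⁻¹ with hcdef
  have hbcont : Continuous b := by
    apply hpw_glue_cont hΩ hKcl hKΩ
    · exact (hucont.abs.continuousOn.mul hgradρ_contOn.norm).mul hρinv_contOn
    · intro x hx; simp [hbdef, huz x hx]
  have hccont : Continuous c := by
    apply hpw_glue_cont hΩ hKcl hKΩ
    · exact (hucont.abs.continuousOn.mul hρC2.continuousOn).mul
        (hgradρ_contOn.norm.inv₀ (fun x hx => norm_ne_zero_iff.2 (hgradne x hx)))
    · intro x hx; simp [hcdef, huz x hx]
  have hbsupp : HasCompactSupport b :=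
    HasCompactSupport.intro hKc (fun x hx => by simp [hbdef, huz x hx])
  have hcsupp : HasCompactSupport c :=
    HasCompactSupport.intro hKc (fun x hx => by simp [hcdef, huz x hx])
  have hbnonneg : ∀ x, 0 ≤ b x := by
    intro x
    by_cases hxu : u x = 0
    · simp [hbdef, hxu]
    · have hρx := hρpos x (hmem x hxu)
      simp only [hbdef]
      positivity
  have hcnonneg : ∀ x, 0 ≤ c x := by
    intro x
    by_cases hxu : u x = 0
    · simp [hcdef, hxu]
    · have hρx := hρpos x (hmem x hxu)
      simp only [hcdef]
      positivity
  have hbsq : ∀ x, b x ^ 2 = g3 x := by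
    intro x
    simp only [hbdef, hg3, mul_pow, sq_abs, inv_pow]
  have hcsq : ∀ x, c x ^ 2 = u x ^ 2 * ρ x ^ 2 / ‖gradient ρ x‖ ^ 2 := by
    intro x
    simp only [hcdef, mul_pow, sq_abs, inv_pow, div_eq_mul_inv]
  have hbc : ∀ x, u x ^ 2 = b x * c x := by
    intro x
    by_cases hxu : u x = 0
    · simp [hbdef, hcdef, hxu]
    · have hxΩ := hmem x hxu
      have hρne := (hρpos x hxΩ).ne'
      have hgne : ‖gradient ρ x‖ ≠ 0 := norm_ne_zero_iff.2 (hgradne x hxΩ)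
      have : b x * c x = (|u x| * |u x|) *
          ((‖gradient ρ x‖ * ‖gradient ρ x‖⁻¹) * (ρ x * (ρ x)⁻¹)) := by
        simp only [hbdef, hcdef]; ring
      rw [this, abs_mul_abs_self, mul_inv_cancel₀ hgne, mul_inv_cancel₀ hρne]
      ring
  -- Hardy step
  set A := ∫ x, ‖gradient u x‖ ^ 2 with hA
  set Hh := ∫ x, g3 x with hHh
  set B := ∫ x, u x ^ 2 * ρ x ^ 2 / ‖gradient ρ x‖ ^ 2 with hB
  have hA0 : 0 ≤ A := integral_nonneg (fun x => by positivity)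
  have hH0 : 0 ≤ Hh := integral_nonneg (fun x => by rw [← hbsq]; positivity)
  have hB0 : 0 ≤ B := integral_nonneg (fun x => by positivity)
  have hg2nonpos : ∫ x, g2 x ≤ 0 := by
    apply integral_nonpos
    intro x
    by_cases hx : x ∈ Ω
    · have h1 : 0 ≤ u x ^ 2 * (ρ x)⁻¹ := by have := (hρpos x hx); positivity
      exact mul_nonpos_iff.2 (Or.inl ⟨h1, hsuper x hx⟩)
    · simp [hg2, huz x (fun h => hx (hKΩ h))]
  have hg1le : ∀ x, g1 x ≤ ‖gradient u x‖ * b x := by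
    intro x
    by_cases hxu : u x = 0
    · simp [hg1, hbdef, hxu]
    · have hρx := hρpos x (hmem x hxu)
      have h1 : |(inner ℝ (gradient u x) (gradient ρ x) : ℝ)|
          ≤ ‖gradient u x‖ * ‖gradient ρ x‖ := abs_real_inner_le_norm _ _
      have h2 : u x * (inner ℝ (gradient u x) (gradient ρ x) : ℝ)
          ≤ |u x| * (‖gradient u x‖ * ‖gradient ρ x‖) := by
        calc u x * (inner ℝ (gradient u x) (gradient ρ x) : ℝ)
            ≤ |u x * (inner ℝ (gradient u x) (gradient ρ x) : ℝ)| := le_abs_self _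
          _ = |u x| * |(inner ℝ (gradient u x) (gradient ρ x) : ℝ)| := abs_mul _ _
          _ ≤ |u x| * (‖gradient u x‖ * ‖gradient ρ x‖) :=
              mul_le_mul_of_nonneg_left h1 (abs_nonneg _)
      have h3 : (0:ℝ) ≤ (ρ x)⁻¹ := by positivity
      simp only [hg1, hbdef]
      calc u x * (inner ℝ (gradient u x) (gradient ρ x) : ℝ) * (ρ x)⁻¹
          ≤ |u x| * (‖gradient u x‖ * ‖gradient ρ x‖) * (ρ x)⁻¹ :=
            mul_le_mul_of_nonneg_right h2 h3
        _ = ‖gradient u x‖ * (|u x| * ‖gradient ρ x‖ * (ρ x)⁻¹) := by ring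
  have hanorm_cont : Continuous (fun x => ‖gradient u x‖) := hgradu_cont.norm
  have hanorm_supp : HasCompactSupport (fun x => ‖gradient u x‖) :=
    HasCompactSupport.intro hKc (fun x hx => by rw [hgradu0 x hx]; simp)
  have habint : Integrable (fun x => ‖gradient u x‖ * b x) :=
    (hanorm_cont.mul hbcont).integrable_of_hasCompactSupport
      (HasCompactSupport.intro hKc (fun x hx => by simp [hbdef, huz x hx]))
  have hHardy : Hh ≤ 2 * (A ^ (1/2:ℝ) * Hh ^ (1/2:ℝ)) := by
    have h1 : Hh = 2 * (∫ x, g1 x) + ∫ x, g2 x := by linarith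
    have h2 : (∫ x, g1 x) ≤ ∫ x, ‖gradient u x‖ * b x :=
      integral_mono hg1int habint hg1le
    have h3 : ∫ x, ‖gradient u x‖ * b x
        ≤ (∫ x, ‖gradient u x‖ ^ 2) ^ (1/2:ℝ) * (∫ x, b x ^ 2) ^ (1/2:ℝ) :=
      hpw_holder _ _ hanorm_cont hbcont hanorm_supp hbsupp
        (fun x => norm_nonneg _) hbnonneg
    have h4 : (∫ x, b x ^ 2) = Hh := by
      rw [hHh]; exact integral_congr_ae (Eventually.of_forall (fun x => hbsq x))
    rw [h4] at h3
    linarith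
  -- Cauchy–Schwarz step
  have hCS : (∫ x, u x ^ 2) ≤ Hh ^ (1/2:ℝ) * B ^ (1/2:ℝ) := by
    have h1 : (∫ x, u x ^ 2) = ∫ x, b x * c x :=
      integral_congr_ae (Eventually.of_forall (fun x => hbc x))
    have h2 : ∫ x, b x * c x
        ≤ (∫ x, b x ^ 2) ^ (1/2:ℝ) * (∫ x, c x ^ 2) ^ (1/2:ℝ) :=
      hpw_holder _ _ hbcont hccont hbsupp hcsupp hbnonneg hcnonneg
    have h3 : (∫ x, b x ^ 2) = Hh := by
      rw [hHh]; exact integral_congr_ae (Eventually.of_forall (fun x => hbsq x))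
    have h4 : (∫ x, c x ^ 2) = B := by
      rw [hB]; exact integral_congr_ae (Eventually.of_forall (fun x => hcsq x))
    rw [h3, h4] at h2
    linarith
  -- convert set integrals
  have hsetL : ∫ x in Ω, u x ^ 2 = ∫ x, u x ^ 2 :=
    setIntegral_eq_integral_of_forall_compl_eq_zero
      (fun x hx => by rw [huz x (fun h => hx (hKΩ h))]; ring)
  have hsetA : ∫ x in Ω, ‖gradient u x‖ ^ 2 = A :=
    setIntegral_eq_integral_of_forall_compl_eq_zero
      (fun x hx => by rw [hgradu0 x (fun h => hx (hKΩ h))]; simp)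
  have hsetB : (∫ x in Ω, u x ^ 2 * ρ x ^ 2 / ‖gradient ρ x‖ ^ 2) = B :=
    setIntegral_eq_integral_of_forall_compl_eq_zero
      (fun x hx => by rw [huz x (fun h => hx (hKΩ h))]; ring)
  rw [hsetL, hsetA, hsetB]
  -- final algebra with square roots
  rw [show A ^ (1/2:ℝ) = Real.sqrt A from (Real.sqrt_eq_rpow A).symm,
    show B ^ (1/2:ℝ) = Real.sqrt B from (Real.sqrt_eq_rpow B).symm] at *
  rw [show Hh ^ (1/2:ℝ) = Real.sqrt Hh from (Real.sqrt_eq_rpow Hh).symm] at *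
  have hsH : Real.sqrt Hh ≤ 2 * Real.sqrt A := by
    rcases eq_or_lt_of_le (Real.sqrt_nonneg Hh) with h0 | h0
    · rw [← h0]; positivity
    · have hmul : Real.sqrt Hh * Real.sqrt Hh ≤ (2 * Real.sqrt A) * Real.sqrt Hh := by
        rw [Real.mul_self_sqrt hH0]
        calc Hh ≤ 2 * (Real.sqrt A * Real.sqrt Hh) := hHardy
          _ = (2 * Real.sqrt A) * Real.sqrt Hh := by ring
      exact le_of_mul_le_mul_right hmul h0
  calc (∫ x, u x ^ 2) ≤ Real.sqrt Hh * Real.sqrt B := hCS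
    _ ≤ (2 * Real.sqrt A) * Real.sqrt B :=
        mul_le_mul_of_nonneg_right hsH (Real.sqrt_nonneg B)
    _ = 2 * Real.sqrt A * Real.sqrt B := by ring
end

section
/- Let Ω ⊂ ℝⁿ be open, θ < 1 a real number, and ρ ∈ C²(Ω) a positive function with Δρ ≤ 0 on Ω. Then for every u ∈ C_0^∞(Ω): ((1-θ)²/4) ∫_Ω ρ^θ (u²/ρ²) |∇ρ|² dx ≤ ∫_Ω ρ^θ |∇u|² dx. -/
open MeasureTheory

section Aux

open Set Filter Topology Manifold

variable {n : ℕ}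

lemma norm_gradient_sq (f : EuclideanSpace ℝ (Fin n) → ℝ) (x : EuclideanSpace ℝ (Fin n)) :
    ‖gradient f x‖ ^ 2 = ∑ i, (fderiv ℝ f x (EuclideanSpace.single i 1)) ^ 2 := by
  have h1 : ‖gradient f x‖ ^ 2 = ∑ i, (gradient f x i) ^ 2 := by
    rw [EuclideanSpace.norm_eq, Real.sq_sqrt (by positivity)]
    simp [sq_abs]
  rw [h1]
  refine Finset.sum_congr rfl fun i _ => ?_
  have h2 : gradient f x i = inner ℝ (gradient f x) (EuclideanSpace.single i (1:ℝ)) := by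
    rw [EuclideanSpace.inner_single_right]; simp
  have h3 : (inner ℝ (gradient f x) (EuclideanSpace.single i (1:ℝ)) : ℝ)
      = fderiv ℝ f x (EuclideanSpace.single i 1) := by
    rw [gradient]; exact InnerProductSpace.toDual_symm_apply
  rw [h2, h3]

lemma exists_cutoff {s t : Set (EuclideanSpace ℝ (Fin n))} (hs : IsClosed s) (ht : IsClosed t)
    (hd : Disjoint s t) :
    ∃ ψ : EuclideanSpace ℝ (Fin n) → ℝ, ContDiff ℝ (⊤:ℕ∞) ψ ∧ EqOn ψ 0 s ∧ EqOn ψ 1 t ∧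
      ∀ x, ψ x ∈ Icc (0:ℝ) 1 := by
  obtain ⟨f, h0, h1, hicc⟩ :=
    exists_contMDiffMap_zero_one_of_isClosed (n := (⊤:ℕ∞)) (𝓘(ℝ, EuclideanSpace ℝ (Fin n))) hs ht hd
  exact ⟨f, contMDiff_iff_contDiff.mp f.contMDiff, h0, h1, hicc⟩

lemma cutoff_continuous {Ω : Set (EuclideanSpace ℝ (Fin n))} (hΩ : IsOpen Ω)
    {ψ h : EuclideanSpace ℝ (Fin n) → ℝ} (hψ : Continuous ψ) (hψs : tsupport ψ ⊆ Ω)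
    (hh : ContinuousOn h Ω) : Continuous fun x => ψ x * h x := by
  rw [continuous_iff_continuousAt]; intro x
  by_cases hx : x ∈ Ω
  · exact hψ.continuousAt.mul ((hh x hx).continuousAt (hΩ.mem_nhds hx))
  · have h0 : (fun y => ψ y * h y) =ᶠ[𝓝 x] fun _ => 0 := by
      have hmem : (tsupport ψ)ᶜ ∈ 𝓝 x :=
        (isClosed_tsupport ψ).isOpen_compl.mem_nhds (fun hc => hx (hψs hc))
      filter_upwards [hmem] with y hy
      simp [image_eq_zero_of_notMem_tsupport hy]
    exact continuousAt_const.congr h0.symm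

lemma cutoff_contDiff {Ω : Set (EuclideanSpace ℝ (Fin n))} (hΩ : IsOpen Ω)
    {ψ h : EuclideanSpace ℝ (Fin n) → ℝ} (hψ : ContDiff ℝ (⊤:ℕ∞) ψ) (hψs : tsupport ψ ⊆ Ω)
    (hh : ∀ x ∈ Ω, ContDiffAt ℝ 1 h x) : ContDiff ℝ 1 fun x => ψ x * h x := by
  rw [contDiff_iff_contDiffAt]; intro x
  by_cases hx : x ∈ Ω
  · exact ((hψ.of_le (by exact_mod_cast le_top)).contDiffAt).mul (hh x hx)
  · have h0 : (fun y => ψ y * h y) =ᶠ[𝓝 x] fun _ => 0 := by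
      have hmem : (tsupport ψ)ᶜ ∈ 𝓝 x :=
        (isClosed_tsupport ψ).isOpen_compl.mem_nhds (fun hc => hx (hψs hc))
      filter_upwards [hmem] with y hy
      simp [image_eq_zero_of_notMem_tsupport hy]
    exact contDiffAt_const.congr_of_eventuallyEq h0

end Aux

open Set Filter Topology

set_option maxHeartbeats 1000000 in
theorem weighted_hardy_theta (n : ℕ) (Ω : Set (EuclideanSpace ℝ (Fin n)))
    (hΩ : IsOpen Ω) (θ : ℝ) (hθ : θ < 1)
    (ρ : EuclideanSpace ℝ (Fin n) → ℝ)
    (hρC2 : ContDiffOn ℝ 2 ρ Ω) (hρpos : ∀ x ∈ Ω, 0 < ρ x)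
    (hsuper : ∀ x ∈ Ω, lap ρ x ≤ 0)
    (u : EuclideanSpace ℝ (Fin n) → ℝ)
    (hu : ContDiff ℝ (⊤ : ℕ∞) u) (hcs : HasCompactSupport u) (hsupp : tsupport u ⊆ Ω) :
    (1 - θ) ^ 2 / 4 * ∫ x in Ω, ρ x ^ θ * ((u x) ^ 2 / (ρ x) ^ 2) * ‖gradient ρ x‖ ^ 2
      ≤ ∫ x in Ω, ρ x ^ θ * ‖gradient u x‖ ^ 2 := by
  classical
  set e : Fin n → EuclideanSpace ℝ (Fin n) := fun i => EuclideanSpace.single i (1:ℝ) with he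
  -- compact exhaustion
  obtain ⟨K₁, hK₁c, hKK₁, hK₁Ω⟩ := exists_compact_between hcs hΩ hsupp
  obtain ⟨K₂, hK₂c, hK₁K₂, hK₂Ω⟩ := exists_compact_between hK₁c hΩ hK₁Ω
  -- cutoff function
  obtain ⟨ψ, hψsm, hψ0, hψ1, hψicc⟩ := exists_cutoff (s := (interior K₂)ᶜ) (t := K₁)
    isOpen_interior.isClosed_compl hK₁c.isClosed
    (disjoint_compl_left_iff_subset.mpr hK₁K₂)
  have hψnn : ∀ x, 0 ≤ ψ x := fun x => (hψicc x).1
  have hψsupp : tsupport ψ ⊆ Ω := by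
    have h1 : Function.support ψ ⊆ interior K₂ := by
      intro x hx
      by_contra hc
      exact hx (hψ0 hc)
    calc tsupport ψ ⊆ closure (interior K₂) := closure_mono h1
      _ ⊆ K₂ := closure_minimal interior_subset hK₂c.isClosed
      _ ⊆ Ω := hK₂Ω
  have hψcs : HasCompactSupport ψ :=
    HasCompactSupport.of_support_subset_isCompact hK₂c
      ((subset_closure.trans (closure_mono (fun x hx => by
        by_contra hc; exact hx (hψ0 hc)))).trans
        (closure_minimal interior_subset hK₂c.isClosed))
  -- basic smoothness facts
  have husm : ContDiff ℝ 1 u := hu.of_le (by simp)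
  have hud : ∀ x, DifferentiableAt ℝ u x := fun x => husm.differentiable one_ne_zero x
  have hρdiff : ∀ x ∈ Ω, DifferentiableAt ℝ ρ x := fun x hx =>
    ((hρC2.contDiffAt (hΩ.mem_nhds hx)).of_le one_le_two).differentiableAt one_ne_zero
  have hQcd : ∀ i : Fin n, ContDiffOn ℝ 1 (fun y => fderiv ℝ ρ y (e i)) Ω := by
    intro i
    exact (hρC2.fderiv_of_isOpen hΩ le_rfl).clm_apply contDiffOn_const
  have hQdiff : ∀ i : Fin n, ∀ x ∈ Ω, DifferentiableAt ℝ (fun y => fderiv ℝ ρ y (e i)) x :=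
    fun i x hx => ((hQcd i).contDiffAt (hΩ.mem_nhds hx)).differentiableAt one_ne_zero
  have hQcont : ∀ i : Fin n, ContinuousOn (fun y => fderiv ℝ ρ y (e i)) Ω :=
    fun i => (hQcd i).continuousOn
  have hρcont : ContinuousOn ρ Ω := hρC2.continuousOn
  -- rpow facts
  have hPcd : ∀ p : ℝ, ∀ x ∈ Ω, ContDiffAt ℝ 1 (fun y => ρ y ^ p) x := fun p x hx =>
    ((hρC2.contDiffAt (hΩ.mem_nhds hx)).of_le one_le_two).rpow_const_of_ne
      (ne_of_gt (hρpos x hx))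
  have hPcont : ∀ p : ℝ, ContinuousOn (fun y => ρ y ^ p) Ω := fun p =>
    hρcont.rpow_const (fun x hx => Or.inl (ne_of_gt (hρpos x hx)))
  -- second derivatives
  set q : Fin n → EuclideanSpace ℝ (Fin n) → ℝ := fun i x => fderiv ℝ (fun y => fderiv ℝ ρ y (e i)) x (e i) with hq
  have hlap : ∀ x, lap ρ x = ∑ i, q i x := fun x => rfl
  have hqcont : ∀ i, ContinuousOn (q i) Ω := by
    intro i
    exact ((hQcd i).continuousOn_fderiv_of_isOpen hΩ le_rfl).clm_apply continuousOn_const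
  -- vanishing off K₂
  have hKint : tsupport u ⊆ interior K₁ := hKK₁
  have huK : ∀ x, u x ≠ 0 → x ∈ interior K₁ := fun x hx =>
    hKint (subset_closure (Function.mem_support.mpr hx))
  have hψsupp2 : tsupport ψ ⊆ K₂ := by
    have h1 : Function.support ψ ⊆ interior K₂ := fun x hx => by
      by_contra hc; exact hx (hψ0 hc)
    exact (closure_mono h1).trans (closure_minimal interior_subset hK₂c.isClosed)
  have hψK₂ : ∀ x, x ∉ K₂ → ψ x = 0 := by
    intro x hx
    by_contra hc
    exact hx (hψsupp2 (subset_closure (Function.mem_support.mpr hc)))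
  -- the functions
  set S : EuclideanSpace ℝ (Fin n) → ℝ := fun x => ∑ i, (fderiv ℝ ρ x (e i))^2 with hS
  set Su : EuclideanSpace ℝ (Fin n) → ℝ := fun x => ∑ i, (fderiv ℝ u x (e i))^2 with hSu
  set T : EuclideanSpace ℝ (Fin n) → ℝ :=
    fun x => ∑ i, fderiv ℝ ρ x (e i) * fderiv ℝ u x (e i) with hT
  set W : EuclideanSpace ℝ (Fin n) → ℝ :=
    fun x => ψ x * (ρ x ^ (θ-2) * (u x ^ 2 * S x)) with hW
  set L : EuclideanSpace ℝ (Fin n) → ℝ :=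
    fun x => ψ x * (ρ x ^ (θ-1) * (u x ^ 2 * lap ρ x)) with hL
  set V : EuclideanSpace ℝ (Fin n) → ℝ :=
    fun x => ψ x * (ρ x ^ (θ-1) * (u x * T x)) with hV
  set Bf : EuclideanSpace ℝ (Fin n) → ℝ := fun x => ψ x * (ρ x ^ θ * Su x) with hBf
  set F : Fin n → EuclideanSpace ℝ (Fin n) → ℝ :=
    fun i x => ψ x * (ρ x ^ (θ-1) * fderiv ℝ ρ x (e i)) with hF
  set G : EuclideanSpace ℝ (Fin n) → ℝ := fun x => u x * u x with hG
  -- continuity of the pieces on Ω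
  have hScont : ContinuousOn S Ω := by
    apply continuousOn_finset_sum
    intro i _
    exact (hQcont i).pow 2
  have hTcont : ContinuousOn T Ω := by
    apply continuousOn_finset_sum
    intro i _
    exact (hQcont i).mul (Continuous.continuousOn (by
      exact (ContinuousLinearMap.apply ℝ ℝ (e i)).continuous.comp
        (husm.continuous_fderiv one_ne_zero)))
  have hlapcont : ContinuousOn (lap ρ) Ω := by
    have : ContinuousOn (fun x => ∑ i, q i x) Ω := continuousOn_finset_sum _ fun i _ => hqcont i
    exact this.congr (fun x _ => hlap x)
  -- integrability helper
  have intCC : ∀ f : EuclideanSpace ℝ (Fin n) → ℝ,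
      Continuous f → (∀ x ∉ K₂, f x = 0) → Integrable f := fun f hf h0 =>
    hf.integrable_of_hasCompactSupport
      (HasCompactSupport.of_support_subset_isCompact hK₂c
        (Function.support_subset_iff'.mpr h0))
  have huSu : Continuous Su := by
    apply continuous_finset_sum
    intro i _
    exact ((ContinuousLinearMap.apply ℝ ℝ (e i)).continuous.comp
            (husm.continuous_fderiv one_ne_zero)).pow 2
  have hWcont : Continuous W :=
    cutoff_continuous hΩ hψsm.continuous hψsupp
      ((hPcont (θ-2)).mul (((hu.continuous.pow 2).continuousOn).mul hScont))
  have hLcont : Continuous L :=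
    cutoff_continuous hΩ hψsm.continuous hψsupp
      ((hPcont (θ-1)).mul (((hu.continuous.pow 2).continuousOn).mul hlapcont))
  have hVcont : Continuous V :=
    cutoff_continuous hΩ hψsm.continuous hψsupp
      ((hPcont (θ-1)).mul ((hu.continuous.continuousOn).mul hTcont))
  have hBfcont : Continuous Bf :=
    cutoff_continuous hΩ hψsm.continuous hψsupp
      ((hPcont θ).mul huSu.continuousOn)
  have hWint : Integrable W := intCC W hWcont (fun x hx => by rw [hW]; simp [hψK₂ x hx])
  have hLint : Integrable L := intCC L hLcont (fun x hx => by rw [hL]; simp [hψK₂ x hx])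
  have hVint : Integrable V := intCC V hVcont (fun x hx => by rw [hV]; simp [hψK₂ x hx])
  have hBfint : Integrable Bf := intCC Bf hBfcont (fun x hx => by rw [hBf]; simp [hψK₂ x hx])
  -- F is C¹
  have hFC1 : ∀ i, ContDiff ℝ 1 (F i) := fun i =>
    cutoff_contDiff hΩ hψsm hψsupp (fun x hx =>
      (hPcd (θ-1) x hx).mul ((hQcd i).contDiffAt (hΩ.mem_nhds hx)))
  have hFdiff : ∀ i, Differentiable ℝ (F i) := fun i => (hFC1 i).differentiable one_ne_zero
  have hFcont : ∀ i, Continuous (F i) := fun i => (hFC1 i).continuous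
  have hF'cont : ∀ i, Continuous (fun x => fderiv ℝ (F i) x (e i)) := fun i =>
    (ContinuousLinearMap.apply ℝ ℝ (e i)).continuous.comp ((hFC1 i).continuous_fderiv one_ne_zero)
  have hGdiff : Differentiable ℝ G := fun x => (hud x).mul (hud x)
  have hGder : ∀ x (i : Fin n), fderiv ℝ G x (e i) = 2 * (u x * fderiv ℝ u x (e i)) := by
    intro x i
    rw [hG, fderiv_fun_mul (hud x) (hud x)]
    simp
    ring
  have hG'cont : ∀ i : Fin n, Continuous (fun x => fderiv ℝ G x (e i)) := by
    intro i
    have : (fun x => fderiv ℝ G x (e i)) = fun x => 2 * (u x * fderiv ℝ u x (e i)) :=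
      funext fun x => hGder x i
    rw [this]
    exact (continuous_const.mul (hu.continuous.mul
      ((ContinuousLinearMap.apply ℝ ℝ (e i)).continuous.comp
        (husm.continuous_fderiv one_ne_zero))))
  have huK₂ : ∀ x, x ∉ K₂ → u x = 0 := fun x hx =>
    image_eq_zero_of_notMem_tsupport (fun hc => hx (interior_subset (hK₁K₂ (interior_subset (hKint hc)))))
  -- integrability of the IBP integrands
  have int1 : ∀ i, Integrable (fun x => F i x * fderiv ℝ G x (e i)) := fun i =>
    intCC _ ((hFcont i).mul (hG'cont i))
      (fun x hx => by rw [hF]; simp [hψK₂ x hx])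
  have int2 : ∀ i, Integrable (fun x => fderiv ℝ (F i) x (e i) * G x) := fun i =>
    intCC _ ((hF'cont i).mul (hu.continuous.mul hu.continuous))
      (fun x hx => by rw [hG]; simp [huK₂ x hx])
  have int3 : ∀ i, Integrable (fun x => F i x * G x) := fun i =>
    intCC _ ((hFcont i).mul (hu.continuous.mul hu.continuous))
      (fun x hx => by rw [hG]; simp [huK₂ x hx])
  -- integration by parts
  have hibp : ∀ i, ∫ x, F i x * fderiv ℝ G x (e i) = - ∫ x, fderiv ℝ (F i) x (e i) * G x :=
    fun i => integral_mul_fderiv_eq_neg_fderiv_mul_of_integrable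
      (int2 i) (int1 i) (int3 i) (fun x _ => hFdiff i x) (fun x _ => hGdiff x)
  -- derivative formula for F i on interior K₁
  have hF'eq : ∀ (i : Fin n), ∀ x ∈ interior K₁, fderiv ℝ (F i) x (e i)
      = (θ-1) * (ρ x ^ (θ-2) * (fderiv ℝ ρ x (e i) * fderiv ℝ ρ x (e i)))
        + ρ x ^ (θ-1) * q i x := by
    intro i x hx
    have hxΩ : x ∈ Ω := hK₁Ω (interior_subset hx)
    have hev : F i =ᶠ[𝓝 x] fun y => ρ y ^ (θ-1) * fderiv ℝ ρ y (e i) := by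
      filter_upwards [isOpen_interior.mem_nhds hx] with y hy
      rw [hF]
      simp only [hψ1 (interior_subset hy), Pi.one_apply, one_mul]
    rw [hev.fderiv_eq]
    have hPd : HasFDerivAt (fun y => ρ y ^ (θ-1))
        (((θ-1) * ρ x ^ (θ-1-1)) • fderiv ℝ ρ x) x :=
      (hρdiff x hxΩ).hasFDerivAt.rpow_const (Or.inl (ne_of_gt (hρpos x hxΩ)))
    have hQd := (hQdiff i x hxΩ).hasFDerivAt
    have hmul := hPd.mul hQd
    rw [show (fun y => ρ y ^ (θ-1) * fderiv ℝ ρ y (e i)) = (fun y => ρ y ^ (θ-1)) * (fun y => fderiv ℝ ρ y (e i)) from rfl, hmul.fderiv]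
    have hep : θ - 1 - 1 = θ - 2 := by ring
    rw [hep]
    simp only [ContinuousLinearMap.add_apply, ContinuousLinearMap.smul_apply, smul_eq_mul, hq]
    ring
  -- pointwise identity for the divergence term
  have hsum2 : ∀ x, ∑ i, fderiv ℝ (F i) x (e i) * G x = (θ-1) * W x + L x := by
    intro x
    by_cases hux : u x = 0
    · simp [hG, hW, hL, hux]
    · have hxK : x ∈ interior K₁ := huK x hux
      have h1 : ∀ i : Fin n, fderiv ℝ (F i) x (e i) * G x
          = ((θ-1) * (ρ x ^ (θ-2) * (u x * u x))) * (fderiv ℝ ρ x (e i))^2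
            + (ρ x ^ (θ-1) * (u x * u x)) * q i x := by
        intro i
        rw [hF'eq i x hxK, hG]
        ring
      rw [Finset.sum_congr rfl (fun i _ => h1 i), Finset.sum_add_distrib,
        ← Finset.mul_sum, ← Finset.mul_sum]
      simp only [hW, hL, hS, hlap x, hψ1 (interior_subset hxK), Pi.one_apply]
      ring
  -- pointwise sum for the V term
  have hsum1 : ∀ x, (2:ℝ) * V x = ∑ i, F i x * fderiv ℝ G x (e i) := by
    intro x
    have h1 : ∀ i : Fin n, F i x * fderiv ℝ G x (e i)
        = (2 * (ψ x * (ρ x ^ (θ-1) * u x))) * (fderiv ℝ ρ x (e i) * fderiv ℝ u x (e i)) := by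
      intro i
      rw [hGder x i, hF]
      ring
    rw [Finset.sum_congr rfl (fun i _ => h1 i), ← Finset.mul_sum]
    simp only [hV, hT]
    ring
  -- the integral identities
  have keyA : ∫ x, (2:ℝ) * V x = ∑ i, ∫ x, F i x * fderiv ℝ G x (e i) := by
    rw [← integral_finset_sum Finset.univ (fun i _ => int1 i)]
    exact integral_congr_ae (Filter.Eventually.of_forall hsum1)
  have keyB : ∑ i, ∫ x, fderiv ℝ (F i) x (e i) * G x = (θ-1) * (∫ x, W x) + ∫ x, L x := by
    rw [← integral_finset_sum Finset.univ (fun i _ => int2 i)]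
    rw [show (fun x => ∑ i, fderiv ℝ (F i) x (e i) * G x)
        = fun x => (θ-1) * W x + L x from funext hsum2]
    rw [integral_add (hWint.const_mul (θ-1)) hLint, MeasureTheory.integral_const_mul]
  have hψ0out : ∀ x, x ∉ Ω → ψ x = 0 := fun x hx => hψK₂ x (fun hc => hx (hK₂Ω hc))
  have hLnonpos : ∫ x, L x ≤ 0 := by
    apply integral_nonpos
    intro x
    by_cases hxΩ : x ∈ Ω
    · have h1 : lap ρ x ≤ 0 := hsuper x hxΩ
      have h2 : (0:ℝ) ≤ ρ x ^ (θ-1) := Real.rpow_nonneg (hρpos x hxΩ).le _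
      have h3 : (0:ℝ) ≤ u x ^ 2 := sq_nonneg _
      show ψ x * (ρ x ^ (θ-1) * (u x ^ 2 * lap ρ x)) ≤ 0
      exact mul_nonpos_of_nonneg_of_nonpos (hψnn x)
        (mul_nonpos_of_nonneg_of_nonpos h2 (mul_nonpos_of_nonneg_of_nonpos h3 h1))
    · show ψ x * (ρ x ^ (θ-1) * (u x ^ 2 * lap ρ x)) ≤ 0
      rw [hψ0out x hxΩ]
      simp
  -- combine: (1-θ) ∫ W ≤ 2 ∫ V
  have main1 : (1-θ) * (∫ x, W x) ≤ 2 * ∫ x, V x := by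
    have h2V : (2:ℝ) * ∫ x, V x = ∫ x, 2 * V x := (MeasureTheory.integral_const_mul 2 V).symm
    have hibps : ∑ i, ∫ x, F i x * fderiv ℝ G x (e i)
        = - ∑ i, ∫ x, fderiv ℝ (F i) x (e i) * G x := by
      rw [← Finset.sum_neg_distrib]
      exact Finset.sum_congr rfl (fun i _ => hibp i)
    have : (2:ℝ) * ∫ x, V x = -((θ-1) * (∫ x, W x) + ∫ x, L x) := by
      rw [h2V, keyA, hibps, keyB]
    linarith [hLnonpos]
  -- the elementary inequality 2ab ≤ ε a² + ε⁻¹ b²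
  set ε : ℝ := (1-θ)/2 with hεdef
  have hε : 0 < ε := by rw [hεdef]; linarith
  have amgm : ∀ a b : ℝ, 2*(a*b) ≤ ε*a^2 + ε⁻¹*b^2 := by
    intro a b
    have h2 : (2*(a*b))*ε ≤ (ε*a^2 + ε⁻¹*b^2)*ε := by
      have hx : (ε*a^2 + ε⁻¹*b^2)*ε = ε^2*a^2 + b^2 := by
        field_simp
      rw [hx]
      nlinarith [sq_nonneg (ε*a - b)]
    exact le_of_mul_le_mul_right h2 hε
  -- pointwise inequality 2 V ≤ ε W + ε⁻¹ Bf
  have hptwise : ∀ x, 2 * V x ≤ ε * W x + ε⁻¹ * Bf x := by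
    intro x
    by_cases hxΩ : x ∈ Ω
    · have hρx := hρpos x hxΩ
      have hprod : ρ x ^ ((θ-2)/2) * ρ x ^ (θ/2) = ρ x ^ (θ-1) := by
        rw [← Real.rpow_add hρx]
        congr 1
        ring
      have ha2 : (ρ x ^ ((θ-2)/2))^2 = ρ x ^ (θ-2) := by
        rw [← Real.rpow_natCast (ρ x ^ ((θ-2)/2)) 2, ← Real.rpow_mul hρx.le]
        congr 1
        ring
      have hb2 : (ρ x ^ (θ/2))^2 = ρ x ^ θ := by
        rw [← Real.rpow_natCast (ρ x ^ (θ/2)) 2, ← Real.rpow_mul hρx.le]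
        congr 1
        ring
      have key_i : ∀ i : Fin n,
          2 * (ρ x ^ (θ-1) * (u x * (fderiv ℝ ρ x (e i) * fderiv ℝ u x (e i))))
          ≤ ε * (ρ x ^ (θ-2) * (u x ^ 2 * (fderiv ℝ ρ x (e i))^2))
            + ε⁻¹ * (ρ x ^ θ * (fderiv ℝ u x (e i))^2) := by
        intro i
        set a : ℝ := ρ x ^ ((θ-2)/2) * (u x * fderiv ℝ ρ x (e i)) with hadef
        set b : ℝ := ρ x ^ (θ/2) * fderiv ℝ u x (e i) with hbdef
        have hab : a * b = ρ x ^ (θ-1) * (u x * (fderiv ℝ ρ x (e i) * fderiv ℝ u x (e i))) := by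
          rw [hadef, hbdef, ← hprod]
          ring
        have ha2' : a^2 = ρ x ^ (θ-2) * (u x ^ 2 * (fderiv ℝ ρ x (e i))^2) := by
          rw [hadef, ← ha2]
          ring
        have hb2' : b^2 = ρ x ^ θ * (fderiv ℝ u x (e i))^2 := by
          rw [hbdef, ← hb2]
          ring
        rw [← hab, ← ha2', ← hb2']
        exact amgm a b
      have e1 : 2 * V x = ψ x * ∑ i,
          2 * (ρ x ^ (θ-1) * (u x * (fderiv ℝ ρ x (e i) * fderiv ℝ u x (e i)))) := by
        simp only [hV, hT, Finset.mul_sum]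
        exact Finset.sum_congr rfl fun i _ => by ring
      have e2 : ε * W x + ε⁻¹ * Bf x = ψ x * ∑ i,
          (ε * (ρ x ^ (θ-2) * (u x ^ 2 * (fderiv ℝ ρ x (e i))^2))
            + ε⁻¹ * (ρ x ^ θ * (fderiv ℝ u x (e i))^2)) := by
        simp only [hW, hBf, hS, hSu, Finset.mul_sum]
        rw [← Finset.sum_add_distrib]
        exact Finset.sum_congr rfl fun i _ => by ring
      rw [e1, e2]
      exact mul_le_mul_of_nonneg_left (Finset.sum_le_sum fun i _ => key_i i) (hψnn x)
    · have h0 : ψ x = 0 := hψ0out x hxΩ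
      simp only [hV, hW, hBf, h0, zero_mul, mul_zero, add_zero, le_refl]
  -- integrate the pointwise inequality
  have main2 : 2 * (∫ x, V x) ≤ ε * (∫ x, W x) + ε⁻¹ * (∫ x, Bf x) := by
    have h1 : ∫ x, 2 * V x ≤ ∫ x, (ε * W x + ε⁻¹ * Bf x) :=
      integral_mono (hVint.const_mul 2) ((hWint.const_mul ε).add (hBfint.const_mul ε⁻¹))
        hptwise
    rw [MeasureTheory.integral_const_mul] at h1
    rwa [integral_add (hWint.const_mul ε) (hBfint.const_mul ε⁻¹),
      MeasureTheory.integral_const_mul, MeasureTheory.integral_const_mul] at h1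
  -- convert the statement integrals
  have convW : (∫ x in Ω, ρ x ^ θ * ((u x) ^ 2 / (ρ x) ^ 2) * ‖gradient ρ x‖ ^ 2)
      = ∫ x, W x := by
    rw [← MeasureTheory.integral_indicator hΩ.measurableSet]
    congr 1
    funext x
    by_cases hxΩ : x ∈ Ω
    · rw [Set.indicator_of_mem hxΩ]
      by_cases hux : u x = 0
      · simp [hW, hux]
      · have hx1 : ψ x = 1 := hψ1 (interior_subset (huK x hux))
        have hρx := hρpos x hxΩ
        have hpow : ρ x ^ (θ-2) = ρ x ^ θ / ρ x ^ (2:ℕ) := by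
          rw [← Real.rpow_natCast (ρ x) 2, ← Real.rpow_sub hρx]
          norm_num
        rw [norm_gradient_sq ρ x]
        simp only [hW, hS, hx1, one_mul, hpow, he]
        field_simp
    · rw [Set.indicator_of_notMem hxΩ]
      simp only [hW]
      rw [hψ0out x hxΩ]
      simp
  have convB : (∫ x in Ω, ρ x ^ θ * ‖gradient u x‖ ^ 2) = ∫ x, Bf x := by
    rw [← MeasureTheory.integral_indicator hΩ.measurableSet]
    congr 1
    funext x
    by_cases hxΩ : x ∈ Ω
    · rw [Set.indicator_of_mem hxΩ]
      by_cases hxK : x ∈ tsupport u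
      · have hx1 : ψ x = 1 := hψ1 (interior_subset (hKint hxK))
        rw [norm_gradient_sq u x]
        simp only [hBf, hSu, hx1, one_mul, he]
      · have hf0 : fderiv ℝ u x = 0 :=
          Function.notMem_support.mp (fun hc => hxK (support_fderiv_subset ℝ hc))
        have hg0 : gradient u x = 0 := by
          rw [gradient, hf0, map_zero]
        simp only [hBf, hSu, hg0, hf0, norm_zero, ContinuousLinearMap.zero_apply]
        simp
    · rw [Set.indicator_of_notMem hxΩ]
      simp only [hBf]
      rw [hψ0out x hxΩ]
      simp
  rw [convW, convB]
  -- final arithmetic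
  have hεA : ε * (∫ x, W x) ≤ ε⁻¹ * (∫ x, Bf x) := by
    have h1θ : (1-θ) = 2 * ε := by rw [hεdef]; ring
    rw [h1θ] at main1
    linarith [main1, main2]
  have h2 : ε * (ε * (∫ x, W x)) ≤ ε * (ε⁻¹ * (∫ x, Bf x)) :=
    mul_le_mul_of_nonneg_left hεA hε.le
  have h3 : ε * (ε⁻¹ * (∫ x, Bf x)) = ∫ x, Bf x := by
    rw [← mul_assoc, mul_inv_cancel₀ hε.ne', one_mul]
  have h4 : (1 - θ)^2/4 * (∫ x, W x) = ε * (ε * (∫ x, W x)) := by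
    rw [hεdef]
    ring
  rw [h4]
  linarith [h2, h3.le, h3.ge]
end

section
/- Let B = {x ∈ ℝⁿ : |x| < 1} be the open unit ball, n ≥ 2. Then for every u ∈ C_0^∞(B \ {0}): (1/4) ∫_B u²/(|x| log|x|)² dx ≤ ∫_B |∇u|² dx. -/
open MeasureTheory Filter

lemma glue_contDiff {E : Type*} [NormedAddCommGroup E] [NormedSpace ℝ E] {u h : E → ℝ}
    {U : Set E} (hU : IsOpen U) (hK : tsupport u ⊆ U) (hu : ContDiff ℝ (⊤ : ℕ∞) u)
    (hh : ∀ x ∈ U, ContDiffAt ℝ (⊤ : ℕ∞) h x) : ContDiff ℝ (⊤ : ℕ∞) fun x => u x * h x := by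
  rw [contDiff_iff_contDiffAt]
  intro x
  by_cases hx : x ∈ U
  · exact hu.contDiffAt.mul (hh x hx)
  · have hx' : x ∉ tsupport u := fun h' => hx (hK h')
    have hev : (fun y => u y * h y) =ᶠ[nhds x] (fun _ => (0:ℝ)) := by
      filter_upwards [(isClosed_tsupport u).isOpen_compl.mem_nhds hx'] with y hy
      simp [image_eq_zero_of_notMem_tsupport hy]
    exact (contDiffAt_const (c := (0:ℝ))).congr_of_eventuallyEq hev

lemma glue_continuous {E : Type*} [NormedAddCommGroup E] [NormedSpace ℝ E] {u h : E → ℝ}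
    {U : Set E} (hU : IsOpen U) (hK : tsupport u ⊆ U) (hu : Continuous u)
    (hh : ∀ x ∈ U, ContinuousAt h x) : Continuous fun x => u x * h x := by
  rw [continuous_iff_continuousAt]
  intro x
  by_cases hx : x ∈ U
  · exact hu.continuousAt.mul (hh x hx)
  · have hx' : x ∉ tsupport u := fun h' => hx (hK h')
    have hev : (fun y => u y * h y) =ᶠ[nhds x] (fun _ => (0:ℝ)) := by
      filter_upwards [(isClosed_tsupport u).isOpen_compl.mem_nhds hx'] with y hy
      simp [image_eq_zero_of_notMem_tsupport hy]
    exact continuousAt_const.congr hev.symm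

noncomputable def wf {E : Type*} [NormedAddCommGroup E] [InnerProductSpace ℝ E] (x : E) : ℝ :=
  -(‖x‖^2 * Real.log (‖x‖^2))⁻¹

noncomputable def cf {E : Type*} [NormedAddCommGroup E] [InnerProductSpace ℝ E] (x : E) : ℝ :=
  2 * ((‖x‖^2 * Real.log (‖x‖^2))⁻¹)^2 * (1 + Real.log (‖x‖^2))

lemma m_ne {E : Type*} [NormedAddCommGroup E] [InnerProductSpace ℝ E] {x : E}
    (hx0 : x ≠ 0) (hx1 : ‖x‖ < 1) : ‖x‖^2 * Real.log (‖x‖^2) ≠ 0 := by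
  have h0 : (0:ℝ) < ‖x‖ := norm_pos_iff.mpr hx0
  have h1 : ‖x‖^2 < 1 := by nlinarith
  have h2 : (0:ℝ) < ‖x‖^2 := by positivity
  have := Real.log_neg h2 h1
  nlinarith

lemma hasFDerivAt_wf {E : Type*} [NormedAddCommGroup E] [InnerProductSpace ℝ E] {x : E}
    (hx0 : x ≠ 0) (hx1 : ‖x‖ < 1) :
    HasFDerivAt wf (cf x • (innerSL ℝ x : E →L[ℝ] ℝ)) x := by
  have h0 : (0:ℝ) < ‖x‖ := norm_pos_iff.mpr hx0
  have h2 : (0:ℝ) < ‖x‖^2 := by positivity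
  have hm := m_ne hx0 hx1
  have hq : HasFDerivAt (fun y : E => ‖y‖^2) ((2:ℝ) • (innerSL ℝ x)) x := by
    have := (hasStrictFDerivAt_norm_sq x).hasFDerivAt
    convert this using 1
    ext v; simp
  have hlq : HasFDerivAt (fun y : E => Real.log (‖y‖^2))
      ((‖x‖^2)⁻¹ • ((2:ℝ) • (innerSL ℝ x))) x := by
    have := (Real.hasDerivAt_log h2.ne').comp_hasFDerivAt x hq; exact this
  have hprod := hq.mul hlq
  have hinv := (hasDerivAt_inv hm).comp_hasFDerivAt x hprod
  have := hinv.neg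
  refine HasFDerivAt.congr_fderiv this ?_
  ext v
  simp only [cf, ContinuousLinearMap.smul_apply, innerSL_apply_apply, ContinuousLinearMap.neg_apply,
    ContinuousLinearMap.add_apply, ContinuousLinearMap.coe_smul', Pi.smul_apply, smul_eq_mul]
  field_simp


lemma scalar_ineq (N r L a t G : ℝ) (hN : 2 ≤ N) (hr : 0 < r) (hL : L < 0)
    (hG : 0 ≤ G) (ht : |t| ≤ G * r) :
    (1/4) * (a^2/(r*L)^2) ≤ G^2
      + (a^2 * ((2*((r^2*(2*L))⁻¹)^2*(1+2*L)) * r^2 + N * (-(r^2*(2*L))⁻¹))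
        + 2*a*((-(r^2*(2*L))⁻¹)*t)) := by
  have hL2 : (0:ℝ) < L^2 := by nlinarith
  have hr2 : (0:ℝ) < r^2 := by positivity
  have hQ : (0:ℝ) < 4*r^2*L^2 := by nlinarith
  have key : (G^2
      + (a^2 * ((2*((r^2*(2*L))⁻¹)^2*(1+2*L)) * r^2 + N * (-(r^2*(2*L))⁻¹))
        + 2*a*((-(r^2*(2*L))⁻¹)*t))) - (1/4) * (a^2/(r*L)^2)
      = (4*r^2*L^2*G^2 + a^2*(1 + 4*L - 2*N*L) - 4*L*(a*t)) / (4*r^2*L^2) := by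
    have hm : r^2*(2*L) ≠ 0 := mul_ne_zero (pow_ne_zero 2 hr.ne') (by linarith)
    field_simp [hr.ne', hL.ne, hm]
    ring
  have h1 : -(|a| * |t|) ≤ a * t := by rw [← abs_mul]; exact neg_abs_le _
  have h2 : |a| * |t| ≤ |a| * (G * r) := mul_le_mul_of_nonneg_left ht (abs_nonneg a)
  have h3 : (0:ℝ) ≤ L * (2 - N) := by nlinarith
  have hnum : (0:ℝ) ≤ 4*r^2*L^2*G^2 + a^2*(1 + 4*L - 2*N*L) - 4*L*(a*t) := by
    nlinarith [sq_nonneg (2*r*(-L)*G - |a|), sq_abs a, abs_nonneg a, abs_nonneg t,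
      mul_le_mul_of_nonneg_left h2 (neg_nonneg.mpr hL.le),
      mul_le_mul_of_nonneg_left h1 (neg_nonneg.mpr hL.le),
      mul_nonneg (sq_nonneg a) h3]
  linarith [div_nonneg hnum hQ.le, key]

theorem log_hardy_aux {E : Type*} [NormedAddCommGroup E] [InnerProductSpace ℝ E]
    [FiniteDimensional ℝ E] [MeasureSpace E] [BorelSpace E]
    [(volume : Measure E).IsAddHaarMeasure]
    (hn : 2 ≤ Module.finrank ℝ E)
    (u : E → ℝ) (hu : ContDiff ℝ (⊤ : ℕ∞) u) (hcs : HasCompactSupport u)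
    (hsupp : tsupport u ⊆ Metric.ball (0 : E) 1 \ {0}) :
    (1 / 4) * ∫ x in Metric.ball (0 : E) 1, (u x) ^ 2 / (‖x‖ * Real.log ‖x‖) ^ 2
      ≤ ∫ x in Metric.ball (0 : E) 1, ‖gradient u x‖ ^ 2 := by
  classical
  set U : Set E := Metric.ball 0 1 \ {0} with hUdef
  have hUopen : IsOpen U := Metric.isOpen_ball.sdiff isClosed_singleton
  have hKU : tsupport u ⊆ U := hsupp
  have memU : ∀ x ∈ U, x ≠ 0 ∧ ‖x‖ < 1 := by
    intro x hx
    refine ⟨fun h => hx.2 h, ?_⟩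
    simpa [mem_ball_zero_iff] using hx.1
  set b := stdOrthonormalBasis ℝ E with hb
  set D : E → ℝ := fun x => cf x * ‖x‖^2 + (Module.finrank ℝ E) * wf x with hD
  set h : Fin (Module.finrank ℝ E) → E → ℝ :=
    fun i y => wf y * (innerSL ℝ (b i)) y with hh
  set g : Fin (Module.finrank ℝ E) → E → ℝ := fun i y => u y * h i y with hg
  set S : E → ℝ := fun x => (u x)^2 * D x + 2 * u x * (wf x * fderiv ℝ u x x) with hS
  set F : Fin (Module.finrank ℝ E) → E → ℝ :=
    fun i x => u x * fderiv ℝ (g i) x (b i) + u x * (fderiv ℝ u x (b i) * h i x) with hF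
  have hwsm : ∀ x ∈ U, ContDiffAt ℝ (⊤ : ℕ∞) (wf : E → ℝ) x := by
    intro x hx
    obtain ⟨hx0, hx1⟩ := memU x hx
    have h0 : (0:ℝ) < ‖x‖ := norm_pos_iff.mpr hx0
    have h2 : (0:ℝ) < ‖x‖^2 := by positivity
    have hq : ContDiffAt ℝ (⊤ : ℕ∞) (fun y : E => ‖y‖^2) x := (contDiff_norm_sq ℝ).contDiffAt
    have hlq : ContDiffAt ℝ (⊤ : ℕ∞) (fun y : E => Real.log (‖y‖^2)) x :=
      by have := (Real.contDiffAt_log.mpr h2.ne').comp x hq; exact this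
    exact ((hq.mul hlq).inv (m_ne hx0 hx1)).neg
  have hhsm : ∀ i, ∀ x ∈ U, ContDiffAt ℝ (⊤ : ℕ∞) (h i) x := by
    intro i x hx
    exact (hwsm x hx).mul (innerSL ℝ (b i)).contDiff.contDiffAt
  have hgsm : ∀ i, ContDiff ℝ (⊤ : ℕ∞) (g i) := fun i =>
    glue_contDiff hUopen hKU hu (hhsm i)
  have hfderiv0 : ∀ x, x ∉ tsupport u → fderiv ℝ u x = 0 := by
    intro x hx
    have hev : u =ᶠ[nhds x] (fun _ => (0:ℝ)) := by
      filter_upwards [(isClosed_tsupport u).isOpen_compl.mem_nhds hx] with y hy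
      exact image_eq_zero_of_notMem_tsupport hy
    rw [hev.fderiv_eq]
    exact fderiv_const_apply 0
  have hgrad_inner : ∀ (x : E) (v : E),
      (inner ℝ (gradient u x) v : ℝ) = fderiv ℝ u x v := by
    intro x v
    exact InnerProductSpace.toDual_symm_apply
  have hSsum : ∀ x, S x = ∑ i, F i x := by
    intro x
    by_cases hux : u x = 0
    · simp [hS, hF, hg, hux]
    · have hxU : x ∈ U := hKU (subset_tsupport u hux)
      obtain ⟨hx0, hx1⟩ := memU x hxU
      have hdu : HasFDerivAt u (fderiv ℝ u x) x := (hu.differentiable (by simp) x).hasFDerivAt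
      have hw := hasFDerivAt_wf hx0 hx1
      have hbb : ∀ i, (inner ℝ (b i) (b i) : ℝ) = 1 := by
        intro i
        rw [real_inner_self_eq_norm_sq, b.orthonormal.1 i]
        norm_num
      have key : ∀ i, fderiv ℝ (g i) x (b i)
          = u x * (wf x + inner ℝ (b i) x * (cf x * inner ℝ x (b i)))
            + (wf x * inner ℝ (b i) x) * fderiv ℝ u x (b i) := by
        intro i
        have hhi : HasFDerivAt (h i)
            (wf x • (innerSL ℝ (b i) : E →L[ℝ] ℝ)
              + (innerSL ℝ (b i) x) • (cf x • (innerSL ℝ x : E →L[ℝ] ℝ))) x :=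
          hw.mul ((innerSL ℝ (b i)).hasFDerivAt)
        have hgi : HasFDerivAt (g i)
            ((u x) • (wf x • (innerSL ℝ (b i) : E →L[ℝ] ℝ)
              + (innerSL ℝ (b i) x) • (cf x • (innerSL ℝ x : E →L[ℝ] ℝ)))
              + (h i x) • fderiv ℝ u x) x := hdu.mul hhi
        rw [hgi.fderiv]
        simp only [hh, ContinuousLinearMap.add_apply, ContinuousLinearMap.coe_smul',
          Pi.smul_apply, innerSL_apply_apply, smul_eq_mul, hbb i]
        ring
      have expand : ∀ i, F i x = (u x)^2 * wf x
          + (u x)^2 * cf x * (inner ℝ (b i) x * inner ℝ x (b i))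
          + 2 * u x * wf x * (inner ℝ (b i) x * fderiv ℝ u x (b i)) := by
        intro i
        rw [hF]
        simp only [key i, hh, innerSL_apply_apply]
        ring
      have sumA : ∑ i, (inner ℝ (b i) x * inner ℝ x (b i) : ℝ) = ‖x‖^2 := by
        have := b.sum_inner_mul_inner x x
        rw [← real_inner_self_eq_norm_sq]
        rw [← this]
        exact Finset.sum_congr rfl fun i _ => mul_comm _ _
      have sumB : ∑ i, (inner ℝ (b i) x : ℝ) * fderiv ℝ u x (b i) = fderiv ℝ u x x := by
        have e : (fderiv ℝ u x) x = (fderiv ℝ u x) (∑ i, (inner ℝ (b i) x : ℝ) • b i) := by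
          rw [b.sum_repr' x]
        rw [e, map_sum]
        exact Finset.sum_congr rfl fun i _ => by
          rw [ContinuousLinearMap.map_smul, smul_eq_mul]
      calc S x = (u x)^2 * wf x * (Module.finrank ℝ E)
            + (u x)^2 * cf x * ‖x‖^2
            + 2 * u x * wf x * fderiv ℝ u x x := by rw [hS, hD]; ring
        _ = ∑ i, F i x := by
            rw [Finset.sum_congr rfl (fun i _ => expand i)]
            rw [Finset.sum_add_distrib, Finset.sum_add_distrib, Finset.sum_const,
              Finset.card_univ, Fintype.card_fin, ← Finset.mul_sum, ← Finset.mul_sum,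
              sumA, sumB, nsmul_eq_mul]
            ring
  have hpt : ∀ x, (1/4) * ((u x)^2 / (‖x‖ * Real.log ‖x‖)^2)
      ≤ ‖gradient u x‖^2 + S x := by
    intro x
    by_cases hux : u x = 0
    · have h1 : (1/4) * ((u x)^2 / (‖x‖ * Real.log ‖x‖)^2) = 0 := by
        rw [hux]; simp
      have h2 : S x = 0 := by simp [hS, hux]
      rw [h1, h2, add_zero]
      positivity
    · have hxU : x ∈ U := hKU (subset_tsupport u hux)
      obtain ⟨hx0, hx1⟩ := memU x hxU
      have hr : (0:ℝ) < ‖x‖ := norm_pos_iff.mpr hx0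
      have hL : Real.log ‖x‖ < 0 := Real.log_neg hr hx1
      have hlog2 : Real.log (‖x‖^2) = 2 * Real.log ‖x‖ := by
        rw [Real.log_pow]; norm_num
      have hwx : wf x = -((‖x‖^2 * (2 * Real.log ‖x‖))⁻¹) := by
        simp only [wf]; rw [hlog2]
      have hcx : cf x = 2*(((‖x‖^2 * (2 * Real.log ‖x‖))⁻¹))^2*(1+2*Real.log ‖x‖) := by
        simp only [cf]; rw [hlog2]
      have ht : |fderiv ℝ u x x| ≤ ‖gradient u x‖ * ‖x‖ := by
        rw [← hgrad_inner]
        exact abs_real_inner_le_norm _ _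
      have hN : (2:ℝ) ≤ (Module.finrank ℝ E : ℝ) := by exact_mod_cast hn
      have main := scalar_ineq (Module.finrank ℝ E : ℝ) ‖x‖ (Real.log ‖x‖) (u x)
        (fderiv ℝ u x x) ‖gradient u x‖ hN hr hL (norm_nonneg _) ht
      have hSx : S x = (u x)^2 * ((2*(((‖x‖^2 * (2 * Real.log ‖x‖))⁻¹))^2*(1+2*Real.log ‖x‖)) * ‖x‖^2
          + (Module.finrank ℝ E : ℝ) * (-((‖x‖^2 * (2 * Real.log ‖x‖))⁻¹)))
          + 2*(u x)*((-((‖x‖^2 * (2 * Real.log ‖x‖))⁻¹)) * fderiv ℝ u x x) := by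
        simp only [hS, hD, hwx, hcx]
        try ring
      rw [hSx]
      linarith [main]
  -- continuity facts
  have hcfsm : ∀ x ∈ U, ContinuousAt (cf : E → ℝ) x := by
    intro x hx
    obtain ⟨hx0, hx1⟩ := memU x hx
    have h0 : (0:ℝ) < ‖x‖ := norm_pos_iff.mpr hx0
    have h2 : (0:ℝ) < ‖x‖^2 := by positivity
    have hq : ContinuousAt (fun y : E => ‖y‖^2) x := (continuous_norm.pow 2).continuousAt
    have hlq : ContinuousAt (fun y : E => Real.log (‖y‖^2)) x :=
      ContinuousAt.comp (x := x) (g := Real.log) (f := fun y : E => ‖y‖^2)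
        (Real.continuousAt_log h2.ne') hq
    exact (continuousAt_const.mul (((hq.mul hlq).inv₀ (m_ne hx0 hx1)).pow 2)).mul
      (continuousAt_const.add hlq)
  have hgradcont : Continuous (gradient u) := by
    have h1 : Continuous (fderiv ℝ u) := hu.continuous_fderiv (by simp)
    exact (InnerProductSpace.toDual ℝ E).symm.continuous.comp h1
  have happ : Continuous (fun x => fderiv ℝ u x x) :=
    isBoundedBilinearMap_apply.continuous.comp
      ((hu.continuous_fderiv (by simp)).prodMk continuous_id)
  have happc : ∀ v : E, Continuous (fun x => fderiv ℝ u x v) := fun v =>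
    isBoundedBilinearMap_apply.continuous.comp
      ((hu.continuous_fderiv (by simp)).prodMk continuous_const)
  have hDcont : ∀ x ∈ U, ContinuousAt D x := by
    intro x hx
    exact ((hcfsm x hx).mul (continuous_norm.pow 2).continuousAt).add
      (continuousAt_const.mul (hwsm x hx).continuousAt)
  -- integrability
  have hcsG : HasCompactSupport (fun x => ‖gradient u x‖^2) := by
    refine HasCompactSupport.intro hcs (fun x hx => ?_)
    have : gradient u x = 0 := by
      show (InnerProductSpace.toDual ℝ E).symm (fderiv ℝ u x) = 0
      rw [hfderiv0 x hx]
      simp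
    rw [this]
    simp
  have hint_G : Integrable (fun x => ‖gradient u x‖^2) :=
    (hgradcont.norm.pow 2).integrable_of_hasCompactSupport hcsG
  have mkint : ∀ (φ : E → ℝ), (∀ x ∈ U, ContinuousAt φ x) →
      Integrable (fun x => u x * φ x) := by
    intro φ hφ
    refine (glue_continuous hUopen hKU hu.continuous hφ).integrable_of_hasCompactSupport ?_
    refine HasCompactSupport.intro hcs (fun x hx => ?_)
    rw [image_eq_zero_of_notMem_tsupport hx, zero_mul]
  have hint_P : Integrable (fun x => u x * (u x / (‖x‖ * Real.log ‖x‖)^2)) := by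
    refine mkint _ (fun x hx => ?_)
    obtain ⟨hx0, hx1⟩ := memU x hx
    have hr : (0:ℝ) < ‖x‖ := norm_pos_iff.mpr hx0
    have hL : Real.log ‖x‖ < 0 := Real.log_neg hr hx1
    have hden : (‖x‖ * Real.log ‖x‖)^2 ≠ 0 :=
      pow_ne_zero 2 (mul_ne_zero hr.ne' hL.ne)
    have hlognorm : ContinuousAt (fun y : E => Real.log ‖y‖) x :=
      ContinuousAt.comp (x := x) (g := Real.log) (f := fun y : E => ‖y‖)
        (Real.continuousAt_log hr.ne') continuous_norm.continuousAt
    exact hu.continuous.continuousAt.div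
      ((continuous_norm.continuousAt.mul hlognorm).pow 2) hden
  have hint_S : Integrable S := by
    have hrw : S = fun x => u x * (u x * D x + 2 * (wf x * fderiv ℝ u x x)) := by
      funext x
      simp only [hS]
      ring
    rw [hrw]
    refine mkint _ (fun x hx => ?_)
    exact (hu.continuous.continuousAt.mul (hDcont x hx)).add
      (continuousAt_const.mul ((hwsm x hx).continuousAt.mul happ.continuousAt))
  have hint_F1 : ∀ i, Integrable (fun x => u x * fderiv ℝ (g i) x (b i)) := by
    intro i
    refine mkint _ (fun x hx => ?_)
    exact (isBoundedBilinearMap_apply.continuous.comp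
      (((hgsm i).continuous_fderiv (by simp)).prodMk continuous_const)).continuousAt
  have hint_F2 : ∀ i, Integrable (fun x => u x * (fderiv ℝ u x (b i) * h i x)) := by
    intro i
    refine mkint _ (fun x hx => ?_)
    exact ((happc (b i)).continuousAt.mul (hhsm i x hx).continuousAt)
  have hint_ug : ∀ i, Integrable (fun x => u x * g i x) := by
    intro i
    refine mkint _ (fun x hx => ?_)
    exact hu.continuous.continuousAt.mul (hhsm i x hx).continuousAt
  have hFzero : ∀ i, ∫ x, F i x = 0 := by
    intro i
    have I1 : Integrable (fun x => fderiv ℝ u x (b i) * g i x) := by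
      refine (hint_F2 i).congr (Filter.Eventually.of_forall (fun x => ?_))
      simp only [hg]
      ring
    have hby := integral_mul_fderiv_eq_neg_fderiv_mul_of_integrable (μ := volume)
      I1 (hint_F1 i) (hint_ug i) (fun x _ => hu.differentiable (by simp) x)
      (fun x _ => (hgsm i).differentiable (by simp) x)
    have hsplit : ∫ x, F i x = (∫ x, u x * fderiv ℝ (g i) x (b i))
        + ∫ x, u x * (fderiv ℝ u x (b i) * h i x) := by
      simp only [hF]
      exact integral_add (hint_F1 i) (hint_F2 i)
    have e2 : ∫ x, u x * (fderiv ℝ u x (b i) * h i x)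
        = ∫ x, fderiv ℝ u x (b i) * g i x := by
      refine integral_congr_ae (Filter.Eventually.of_forall (fun x => ?_))
      simp only [hg]
      ring
    rw [hsplit, e2, hby]
    ring
  have hSzero : ∫ x, S x = 0 := by
    have : ∫ x, S x = ∫ x, ∑ i, F i x := by
      simp only [hSsum]
    rw [this, integral_finset_sum]
    · exact Finset.sum_eq_zero (fun i _ => hFzero i)
    · intro i _
      exact ((hint_F1 i).add (hint_F2 i)).congr
        (Filter.Eventually.of_forall (fun x => by simp only [hF, Pi.add_apply]))
  -- final assembly
  have hint_LHS : Integrable (fun x => (1/4) * ((u x)^2 / (‖x‖ * Real.log ‖x‖)^2)) := by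
    refine (hint_P.const_mul (1/4)).congr (Filter.Eventually.of_forall (fun x => ?_))
    ring
  have hint_GS : Integrable (fun x => ‖gradient u x‖^2 + S x) := hint_G.add hint_S
  have hmono := integral_mono hint_LHS hint_GS hpt
  have eL : ∫ x in Metric.ball (0:E) 1, (u x)^2 / (‖x‖ * Real.log ‖x‖)^2
      = ∫ x, (u x)^2 / (‖x‖ * Real.log ‖x‖)^2 := by
    refine setIntegral_eq_integral_of_forall_compl_eq_zero (fun x hx => ?_)
    have hxn : x ∉ tsupport u := fun hmem => hx (hKU hmem).1
    rw [image_eq_zero_of_notMem_tsupport hxn]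
    simp
  have eR : ∫ x in Metric.ball (0:E) 1, ‖gradient u x‖^2
      = ∫ x, ‖gradient u x‖^2 := by
    refine setIntegral_eq_integral_of_forall_compl_eq_zero (fun x hx => ?_)
    have hxn : x ∉ tsupport u := fun hmem => hx (hKU hmem).1
    have : gradient u x = 0 := by
      show (InnerProductSpace.toDual ℝ E).symm (fderiv ℝ u x) = 0
      rw [hfderiv0 x hxn]
      simp
    rw [this]
    simp
  have step : (1/4) * ∫ x, (u x)^2 / (‖x‖ * Real.log ‖x‖)^2
      = ∫ x, (1/4) * ((u x)^2 / (‖x‖ * Real.log ‖x‖)^2) := by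
    rw [integral_const_mul]
  have final : ∫ x, (‖gradient u x‖^2 + S x) = ∫ x, ‖gradient u x‖^2 := by
    rw [integral_add hint_G hint_S, hSzero, add_zero]
  rw [eL, eR, step]
  calc ∫ x, (1/4) * ((u x)^2 / (‖x‖ * Real.log ‖x‖)^2)
      ≤ ∫ x, (‖gradient u x‖^2 + S x) := hmono
    _ = ∫ x, ‖gradient u x‖^2 := final

theorem log_hardy_ball (n : ℕ) (hn : 2 ≤ n)
    (u : EuclideanSpace ℝ (Fin n) → ℝ)
    (hu : ContDiff ℝ (⊤ : ℕ∞) u) (hcs : HasCompactSupport u)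
    (hsupp : tsupport u ⊆ Metric.ball (0 : EuclideanSpace ℝ (Fin n)) 1 \ {0}) :
    (1 / 4) * ∫ x in Metric.ball (0 : EuclideanSpace ℝ (Fin n)) 1,
        (u x) ^ 2 / (‖x‖ * Real.log ‖x‖) ^ 2
      ≤ ∫ x in Metric.ball (0 : EuclideanSpace ℝ (Fin n)) 1, ‖gradient u x‖ ^ 2 := by
  refine log_hardy_aux ?_ u hu hcs hsupp
  rw [finrank_euclideanSpace_fin]
  exact hn
end
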